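/- arXiv:0912.0387 — 4 statements merged into one kernel-verified Lean document; each statement's English description precedes it below -/
import Mathlib

section
/- Let F be a field of characteristic p > 0 containing an element α that is not a p-th power in F. Let L_α = Fx + Fy + Fz be the abelian restricted Lie algebra with x^[p] = αz, y^[p] = z, z^[p] = 0. Then L_α does not decompose as a direct sum of cyclic restricted subalgebras. -/
section Restricted

variable (p : ℕ) (F : Type*) (L : Type*) [Field F] [LieRing L] [LieAlgebra F L]

/-- A restricted Lie algebra structure on `L` (over `F` of characteristic `p`): a `p`-map
that is `p`-semilinear for scalars, satisfies `ad (x^[p]) = (ad x)^p`, and satisfies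
Jacobson's formula, expressed inside the universal enveloping algebra (where the genuine
`p`-th powers are available) via the canonical embedding `ι`. -/
structure RestrictedStr where
  pMap : L → L
  smul_pow : ∀ (t : F) (x : L), pMap (t • x) = t ^ p • pMap x
  ad_pow : ∀ x y : L, ⁅pMap x, y⁆ = ((LieAlgebra.ad F L x) ^ p) y
  jacobson_add : ∀ x y : L,
    (UniversalEnvelopingAlgebra.ι F (pMap (x + y)) : UniversalEnvelopingAlgebra F L)
        - UniversalEnvelopingAlgebra.ι F (pMap x) - UniversalEnvelopingAlgebra.ι F (pMap y)
      = (UniversalEnvelopingAlgebra.ι F (x + y) : UniversalEnvelopingAlgebra F L) ^ p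
        - (UniversalEnvelopingAlgebra.ι F x : UniversalEnvelopingAlgebra F L) ^ p
        - (UniversalEnvelopingAlgebra.ι F y : UniversalEnvelopingAlgebra F L) ^ p

variable {p F L}

namespace RestrictedStr

variable (S : RestrictedStr p F L)

/-- `L` is `p`-nilpotent: every element is killed by some iterate of the `p`-map. -/
def IsPNilpotent : Prop := ∀ x : L, ∃ n : ℕ, S.pMap^[n] x = 0

/-- The defining relation of the restricted enveloping algebra `u(L)`:
`ι(x)^p = ι(x^[p])` for all `x ∈ L`. -/
def pRel : UniversalEnvelopingAlgebra F L → UniversalEnvelopingAlgebra F L → Prop :=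
  fun a b => ∃ x : L, a = (UniversalEnvelopingAlgebra.ι F x : UniversalEnvelopingAlgebra F L) ^ p ∧
    b = UniversalEnvelopingAlgebra.ι F (S.pMap x)

/-- The restricted enveloping algebra `u(L)`. -/
def uRes : Type _ := RingQuot S.pRel

noncomputable instance : Ring S.uRes := inferInstanceAs (Ring (RingQuot S.pRel))
noncomputable instance : Algebra F S.uRes := inferInstanceAs (Algebra F (RingQuot S.pRel))

attribute [local instance 100] LieRing.ofAssociativeRing

/-- The canonical `F`-linear map `L → u(L)`. -/
noncomputable def iota : L →ₗ[F] S.uRes :=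
  (RingQuot.mkAlgHom F S.pRel).toLinearMap ∘ₗ (UniversalEnvelopingAlgebra.ι F).toLinearMap

/-- The augmentation ideal `ω(L)` of `u(L)`: the (two-sided) ideal generated by the image
of `L`, viewed as an `F`-submodule (so that powers `ω(L)^n` make sense). -/
noncomputable def omega : Submodule F S.uRes :=
  Submodule.span F {a : S.uRes | ∃ u v : S.uRes, ∃ x : L, a = u * S.iota x * v}

/-- The restricted subalgebra of `L` generated by a subset `s`: the smallest Lie subalgebra
containing `s` and closed under the `p`-map. -/
def resSpan (s : Set L) : LieSubalgebra F L :=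
  sInf {K : LieSubalgebra F L | s ⊆ K ∧ ∀ x ∈ K, S.pMap x ∈ K}

/-- `L` decomposes as a direct sum of cyclic restricted subalgebras. -/
def CyclicDecomp : Prop :=
  ∃ (n : ℕ) (x : Fin n → L),
    DirectSum.IsInternal (fun i : Fin n => (S.resSpan {x i}).toSubmodule)

end RestrictedStr

/-- A filtered multiplicative basis of a finite-dimensional associative `F`-algebra `A`:
an `F`-basis `B` such that the product of any two elements of `B` is `0` or lies in `B`,
and `B ∩ rad(A)` is an `F`-basis of the Jacobson radical `rad(A)`. -/
def IsFMBasis (F : Type*) {A : Type*} [Field F] [Ring A] [Algebra F A] (B : Set A) : Prop :=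
  LinearIndependent F ((↑) : B → A) ∧ Submodule.span F B = ⊤ ∧
    (∀ b1 ∈ B, ∀ b2 ∈ B, b1 * b2 = 0 ∨ b1 * b2 ∈ B) ∧
    Submodule.span F (B ∩ (((⊥ : Ideal A).jacobson : Set A))) =
      Submodule.restrictScalars F (⊥ : Ideal A).jacobson

end Restricted


section Helpers

variable (F L : Type*) [Field F] [LieRing L] [LieAlgebra F L] [IsLieAbelian L]

attribute [local instance 100] LieRing.ofAssociativeRing

noncomputable def myAuxHom : L →ₗ⁅F⁆ Module.End F (F × L) where
  toFun w := (LinearMap.inr F F L) ∘ₗ ((LinearMap.fst F F L).smulRight w)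
  map_add' a b := by
    ext u <;>
      simp only [LinearMap.comp_apply, LinearMap.smulRight_apply, LinearMap.add_apply,
        LinearMap.inr_apply, LinearMap.fst_apply, smul_add, Prod.fst_add, Prod.snd_add,
        LinearMap.coe_comp, Function.comp_apply, LinearMap.inl_apply] <;> simp
  map_smul' t a := by
    ext u <;>
      simp only [LinearMap.comp_apply, LinearMap.smulRight_apply, LinearMap.smul_apply,
        LinearMap.inr_apply, LinearMap.fst_apply, RingHom.id_apply, LinearMap.coe_comp,
        Function.comp_apply, LinearMap.inl_apply, Prod.smul_fst, Prod.smul_snd] <;>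
      simp [smul_comm]
  map_lie' := by
    intro a b
    have h : (⁅a, b⁆ : L) = 0 := trivial_lie_zero _ _ _ _
    rw [h]
    ext u <;> simp [Ring.lie_def, Module.End.mul_apply]

theorem myIotaInj : Function.Injective (UniversalEnvelopingAlgebra.ι F (L := L)) := by
  intro a b hab
  have h2 : (UniversalEnvelopingAlgebra.lift F (myAuxHom F L)) (UniversalEnvelopingAlgebra.ι F a)
      = (UniversalEnvelopingAlgebra.lift F (myAuxHom F L)) (UniversalEnvelopingAlgebra.ι F b) := by
    rw [hab]
  rw [UniversalEnvelopingAlgebra.lift_ι_apply, UniversalEnvelopingAlgebra.lift_ι_apply] at h2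
  have h3 := congrArg (fun f => (f (1, 0)).2) (congrArg DFunLike.coe h2)
  simpa [myAuxHom] using h3

theorem myAlgMapInj : Function.Injective (algebraMap F (UniversalEnvelopingAlgebra F L)) := by
  intro a b hab
  have h2 := congrArg (UniversalEnvelopingAlgebra.lift F (myAuxHom F L)) hab
  rw [AlgHom.commutes, AlgHom.commutes] at h2
  have h3 := congrArg (fun f => (f (1, 0)).1) (congrArg DFunLike.coe h2)
  simpa [Algebra.algebraMap_eq_smul_one] using h3

end Helpers

section Add

variable {p : ℕ} {F L : Type*} [Field F] [LieRing L] [LieAlgebra F L]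

attribute [local instance 100] LieRing.ofAssociativeRing

theorem myPMapAdd [Fact p.Prime] [CharP F p] [IsLieAbelian L] (S : RestrictedStr p F L)
    (a b : L) : S.pMap (a + b) = S.pMap a + S.pMap b := by
  haveI : CharP (UniversalEnvelopingAlgebra F L) p :=
    charP_of_injective_algebraMap (myAlgMapInj F L) p
  have hcomm : Commute (UniversalEnvelopingAlgebra.ι F a : UniversalEnvelopingAlgebra F L)
      (UniversalEnvelopingAlgebra.ι F b) := by
    have h := LieHom.map_lie (UniversalEnvelopingAlgebra.ι F) a b
    have hab : (⁅a, b⁆ : L) = 0 := trivial_lie_zero _ _ _ _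
    rw [hab, map_zero, Ring.lie_def] at h
    exact (commute_iff_eq _ _).2 (sub_eq_zero.mp h.symm)
  have hj := S.jacobson_add a b
  rw [map_add, add_pow_char_of_commute p hcomm] at hj
  have h0 : (UniversalEnvelopingAlgebra.ι F (S.pMap (a + b)) : UniversalEnvelopingAlgebra F L)
      = UniversalEnvelopingAlgebra.ι F (S.pMap a + S.pMap b) := by
    rw [map_add]
    have hr : ((UniversalEnvelopingAlgebra.ι F) a ^ p + (UniversalEnvelopingAlgebra.ι F) b ^ p -
        (UniversalEnvelopingAlgebra.ι F) a ^ p - (UniversalEnvelopingAlgebra.ι F) b ^ p :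
        UniversalEnvelopingAlgebra F L) = 0 := by abel
    rw [hr, sub_sub] at hj
    exact sub_eq_zero.mp hj
  exact myIotaInj F L h0

end Add


theorem Lalpha_not_cyclic_decomp (p : ℕ) [Fact p.Prime] (F L : Type*) [Field F]
    [CharP F p] [LieRing L] [LieAlgebra F L] [FiniteDimensional F L] [IsLieAbelian L]
    (α : F) (hα : ∀ t : F, t ^ p ≠ α)
    (S : RestrictedStr p F L) (x y z : L)
    (hbasis : LinearIndependent F ![x, y, z] ∧ Submodule.span F {x, y, z} = ⊤)
    (hx : S.pMap x = α • z) (hy : S.pMap y = z) (hz : S.pMap z = 0) :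
    ¬ S.CyclicDecomp := by
  obtain ⟨hli, hsp⟩ := hbasis
  have hp0 : p ≠ 0 := (Fact.out : p.Prime).ne_zero
  have hzne : z ≠ 0 := by
    have := hli.ne_zero 2
    simpa using this
  -- key computation of the p-map
  have hkey : ∀ w : L, ∃ c : F, S.pMap w = c • z ∧ (c = 0 → w ∈ Submodule.span F {z}) := by
    intro w
    have hw : w ∈ Submodule.span F ({x, y, z} : Set L) := hsp ▸ Submodule.mem_top
    rw [Submodule.mem_span_insert] at hw
    obtain ⟨a, w1, hw1, rfl⟩ := hw
    rw [Submodule.mem_span_insert] at hw1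
    obtain ⟨b, w2, hw2, rfl⟩ := hw1
    rw [Submodule.mem_span_singleton] at hw2
    obtain ⟨c, rfl⟩ := hw2
    refine ⟨a ^ p * α + b ^ p, ?_, ?_⟩
    · rw [myPMapAdd S, myPMapAdd S, S.smul_pow, S.smul_pow, S.smul_pow, hx, hy, hz,
        smul_zero, add_zero, smul_smul, ← add_smul]
    · intro hc
      have ha : a = 0 := by
        by_contra ha
        apply hα ((-b) / a)
        have hap : (a : F) ^ p ≠ 0 := pow_ne_zero _ ha
        rw [div_pow, neg_pow, neg_one_pow_char F p, neg_one_mul, div_eq_iff hap]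
        linear_combination -hc
      have hb : b = 0 := by
        rw [ha, zero_pow hp0, zero_mul, zero_add] at hc
        exact pow_eq_zero_iff hp0 |>.mp hc
      rw [ha, hb]
      simp only [zero_smul, zero_add]
      exact Submodule.smul_mem _ _ (Submodule.mem_span_singleton_self z)
  -- p-map kills the image of the p-map
  have hpp : ∀ w : L, S.pMap (S.pMap w) = 0 := by
    intro w
    obtain ⟨c, hc, -⟩ := hkey w
    rw [hc, S.smul_pow, hz, smul_zero]
  -- resSpan facts
  have hresle : ∀ w : L, ((S.resSpan {w}).toSubmodule : Submodule F L)
      ≤ Submodule.span F {w, S.pMap w} := by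
    intro w
    set K : LieSubalgebra F L :=
      { Submodule.span F ({w, S.pMap w} : Set L) with
        lie_mem' := by
          intro a b _ _
          have h : (⁅a, b⁆ : L) = 0 := trivial_lie_zero _ _ _ _
          rw [h]
          exact Submodule.zero_mem _ } with hK
    have hKmem : K ∈ {K : LieSubalgebra F L | ({w} : Set L) ⊆ K ∧ ∀ u ∈ K, S.pMap u ∈ K} := by
      constructor
      · intro u hu
        rw [Set.mem_singleton_iff] at hu
        subst hu
        exact Submodule.subset_span (Set.mem_insert _ _)
      · intro u hu
        have hu' : u ∈ Submodule.span F ({w, S.pMap w} : Set L) := hu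
        rw [Submodule.mem_span_pair] at hu'
        obtain ⟨s, t, rfl⟩ := hu'
        show S.pMap _ ∈ Submodule.span F ({w, S.pMap w} : Set L)
        rw [myPMapAdd S, S.smul_pow, S.smul_pow, hpp, smul_zero, add_zero]
        exact Submodule.smul_mem _ _
          (Submodule.subset_span (Set.mem_insert_iff.2 (Or.inr rfl)))
    have := (LieSubalgebra.sInf_glb {K : LieSubalgebra F L |
      ({w} : Set L) ⊆ K ∧ ∀ u ∈ K, S.pMap u ∈ K}).1 hKmem
    intro u hu
    exact this hu
  have hgen : ∀ w : L, w ∈ S.resSpan {w} := by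
    intro w
    show w ∈ sInf {K : LieSubalgebra F L | ({w} : Set L) ⊆ K ∧ ∀ u ∈ K, S.pMap u ∈ K}
    rw [← SetLike.mem_coe, LieSubalgebra.coe_sInf]
    simp only [Set.mem_iInter, SetLike.mem_coe]
    intro K hK
    exact hK.1 rfl
  have hclosed : ∀ w u : L, u ∈ S.resSpan {w} → S.pMap u ∈ S.resSpan {w} := by
    intro w u hu
    show S.pMap u ∈ sInf {K : LieSubalgebra F L | ({w} : Set L) ⊆ K ∧ ∀ u ∈ K, S.pMap u ∈ K}
    rw [← SetLike.mem_coe, LieSubalgebra.coe_sInf]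
    simp only [Set.mem_iInter, SetLike.mem_coe]
    intro K hK
    have hu' : u ∈ sInf {K : LieSubalgebra F L |
        ({w} : Set L) ⊆ K ∧ ∀ u ∈ K, S.pMap u ∈ K} := hu
    rw [← SetLike.mem_coe, LieSubalgebra.coe_sInf] at hu'
    simp only [Set.mem_iInter, SetLike.mem_coe] at hu'
    exact hK.2 u (hu' K hK)
  -- the main argument
  rintro ⟨n, a, hint⟩
  have hsup := hint.submodule_iSup_eq_top
  have hdisj := hint.submodule_iSupIndep.pairwiseDisjoint
  have h3le : 3 ≤ Module.finrank F L := by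
    simpa using hli.fintype_card_le_finrank
  by_cases hall : ∀ i, a i ∈ Submodule.span F ({z} : Set L)
  · -- all generators in Fz
    have hle : ∀ i, (S.resSpan {a i}).toSubmodule ≤ Submodule.span F ({z} : Set L) := by
      intro i
      refine (hresle (a i)).trans ?_
      rw [Submodule.span_le]
      rintro u (rfl | rfl)
      · exact hall i
      · obtain ⟨c, hc, -⟩ := hkey (a i)
        rw [hc]
        exact Submodule.smul_mem _ _ (Submodule.mem_span_singleton_self z)
    have htop : (⊤ : Submodule F L) ≤ Submodule.span F ({z} : Set L) := by
      rw [← hsup]; exact iSup_le hle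
    have hxz : x ∈ Submodule.span F ({z} : Set L) := htop Submodule.mem_top
    rw [Submodule.mem_span_singleton] at hxz
    obtain ⟨c, hc⟩ := hxz
    have h1 : Module.finrank F L ≤ 1 := by
      have := Submodule.finrank_mono htop
      simpa [finrank_span_singleton hzne] using this
    omega
  · push_neg at hall
    obtain ⟨i₀, hi₀⟩ := hall
    obtain ⟨c₀, hc₀, hc₀'⟩ := hkey (a i₀)
    have hc₀ne : c₀ ≠ 0 := fun h => hi₀ (hc₀' h)
    have hzmem : z ∈ S.resSpan {a i₀} := by
      have := hclosed _ _ (hgen (a i₀))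
      rw [hc₀] at this
      have h2 := (S.resSpan {a i₀}).smul_mem c₀⁻¹ this
      rwa [inv_smul_smul₀ hc₀ne] at h2
    -- every summand is below span {a i₀, z}
    have hle : ∀ j, (S.resSpan {a j}).toSubmodule ≤ Submodule.span F ({a i₀, z} : Set L) := by
      intro j
      by_cases hj : j = i₀
      · subst hj
        refine (hresle (a j)).trans ?_
        rw [Submodule.span_le]
        rintro u (rfl | rfl)
        · exact Submodule.subset_span (Set.mem_insert _ _)
        · rw [hc₀]
          exact Submodule.smul_mem _ _
            (Submodule.subset_span (Set.mem_insert_iff.2 (Or.inr rfl)))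
      · have hajz : a j ∈ Submodule.span F ({z} : Set L) := by
          by_contra haj
          obtain ⟨c₁, hc₁, hc₁'⟩ := hkey (a j)
          have hc₁ne : c₁ ≠ 0 := fun h => haj (hc₁' h)
          have hzj : z ∈ S.resSpan {a j} := by
            have := hclosed _ _ (hgen (a j))
            rw [hc₁] at this
            have h2 := (S.resSpan {a j}).smul_mem c₁⁻¹ this
            rwa [inv_smul_smul₀ hc₁ne] at h2
          have hd := hdisj hj
          have : z ∈ (⊥ : Submodule F L) :=
            hd.le_bot ⟨hzj, hzmem⟩
          exact hzne (by simpa using this)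
        refine (hresle (a j)).trans ?_
        rw [Submodule.span_le]
        rintro u (rfl | rfl)
        · exact (Submodule.span_le.2 (by
            rintro v rfl
            exact Submodule.subset_span (Set.mem_insert_iff.2 (Or.inr rfl)))) hajz
        · obtain ⟨c₁, hc₁, -⟩ := hkey (a j)
          rw [hc₁]
          exact Submodule.smul_mem _ _
            (Submodule.subset_span (Set.mem_insert_iff.2 (Or.inr rfl)))
    have htop : (⊤ : Submodule F L) ≤ Submodule.span F ({a i₀, z} : Set L) := by
      rw [← hsup]; exact iSup_le hle
    have h2 : Module.finrank F L ≤ 2 := by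
      have h4 : Module.finrank F L
          ≤ Module.finrank F (Submodule.span F ({a i₀, z} : Set L)) := by
        simpa using Submodule.finrank_mono htop
      refine h4.trans ?_
      classical
      refine (finrank_span_le_card _).trans ?_
      simp [Set.toFinset_insert]
      exact Finset.card_insert_le _ _ |>.trans (by simp)
    omega
end

section
/- Let F be a field of characteristic p > 0 containing an element α that is not a p-th power in F, and let L_α = Fx + Fy + Fz be the abelian restricted Lie algebra with x^[p] = αz, y^[p] = z, z^[p] = 0. Then u(L_α) does not have a filtered multiplicative basis. -/
section Restricted

variable (p : ℕ) (F : Type*) (L : Type*) [Field F] [LieRing L] [LieAlgebra F L]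

variable {p F L}

namespace RestrictedStr

variable (S : RestrictedStr p F L)

attribute [local instance 100] LieRing.ofAssociativeRing

end RestrictedStr

end Restricted


/-! ### Auxiliary lemmas -/

section AuxLemmas

lemma mem_of_span_triple {F L M : Type*} [Field F] [AddCommGroup L] [Module F L]
    [AddCommGroup M] [Module F M] {x y z : L} (hb2 : Submodule.span F {x, y, z} = ⊤)
    (g : L →ₗ[F] M) (N : Submodule F M)
    (h1 : g x ∈ N) (h2 : g y ∈ N) (h3 : g z ∈ N) (t : L) : g t ∈ N := by
  have hle : Submodule.span F {x, y, z} ≤ N.comap g :=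
    Submodule.span_le.mpr (by
      intro a ha
      simp only [Set.mem_insert_iff, Set.mem_singleton_iff] at ha
      rcases ha with rfl | rfl | rfl
      · exact h1
      · exact h2
      · exact h3)
  exact hle (hb2 ▸ Submodule.mem_top)

end AuxLemmas

namespace RestrictedStr

variable {p : ℕ} {F L : Type*} [Field F] [LieRing L] [LieAlgebra F L]
variable (S : RestrictedStr p F L)

attribute [local instance 100] LieRing.ofAssociativeRing

lemma iota_apply (t : L) :
    S.iota t = RingQuot.mkAlgHom F S.pRel (UniversalEnvelopingAlgebra.ι F t) := rfl

lemma iota_pow (t : L) : S.iota t ^ p = S.iota (S.pMap t) := by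
  have hrel : S.pRel ((UniversalEnvelopingAlgebra.ι F t : UniversalEnvelopingAlgebra F L) ^ p)
      (UniversalEnvelopingAlgebra.ι F (S.pMap t)) := ⟨t, rfl, rfl⟩
  have h := RingQuot.mkAlgHom_rel F hrel
  rw [map_pow] at h
  exact h

/-- The canonical surjection from the tensor algebra to `u(L)`. -/
noncomputable def pi : TensorAlgebra F L →ₐ[F] S.uRes :=
  (RingQuot.mkAlgHom F S.pRel).comp (UniversalEnvelopingAlgebra.mkAlgHom F L)

lemma pi_surjective : Function.Surjective S.pi := by
  intro a
  obtain ⟨b, rfl⟩ := RingQuot.mkAlgHom_surjective F S.pRel a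
  obtain ⟨c, rfl⟩ := RingCon.mkₐ_surjective (α := F) (UniversalEnvelopingAlgebra.ringCon F L) b
  exact ⟨c, rfl⟩

lemma pi_ι (m : L) : S.pi (TensorAlgebra.ι F m) = S.iota m := rfl

lemma uRes_comm [IsLieAbelian L] : ∀ a b : S.uRes, a * b = b * a := by
  have key : ∀ m m' : L, Commute (S.iota m) (S.iota m') := by
    intro m m'
    have h0 : (UniversalEnvelopingAlgebra.ι F ⁅m, m'⁆ : UniversalEnvelopingAlgebra F L)
        = UniversalEnvelopingAlgebra.ι F m * UniversalEnvelopingAlgebra.ι F m'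
          - UniversalEnvelopingAlgebra.ι F m' * UniversalEnvelopingAlgebra.ι F m := by
      rw [LieHom.map_lie]; rfl
    have h1 : ⁅m, m'⁆ = (0 : L) := trivial_lie_zero _ _ _ _
    rw [h1, map_zero] at h0
    have h2 := congrArg (RingQuot.mkAlgHom F S.pRel) h0
    simp only [map_zero, map_sub, map_mul] at h2
    have h3 := sub_eq_zero.mp h2.symm
    show S.iota m * S.iota m' = S.iota m' * S.iota m
    rw [iota_apply, iota_apply]
    exact h3
  suffices h : ∀ a b : TensorAlgebra F L, Commute (S.pi a) (S.pi b) by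
    intro a b
    obtain ⟨a, rfl⟩ := S.pi_surjective a
    obtain ⟨b, rfl⟩ := S.pi_surjective b
    exact h a b
  intro a b
  induction a using TensorAlgebra.induction with
  | algebraMap r => rw [AlgHom.commutes]; exact Algebra.commutes r _
  | ι m =>
    induction b using TensorAlgebra.induction with
    | algebraMap r => rw [AlgHom.commutes]; exact (Algebra.commutes r _).symm
    | ι m' => rw [pi_ι, pi_ι]; exact key m m'
    | mul u v hu hv => rw [map_mul]; exact hu.mul_right hv
    | add u v hu hv => rw [map_add]; exact hu.add_right hv
  | mul u v hu hv => rw [map_mul]; exact hu.mul_left hv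
  | add u v hu hv => rw [map_add]; exact hu.add_left hv

lemma iota_mem_omega (t : L) : S.iota t ∈ S.omega :=
  Submodule.subset_span ⟨1, 1, t, by simp⟩

lemma omega_absorb {a : S.uRes} (ha : a ∈ S.omega) (r s : S.uRes) : r * a * s ∈ S.omega := by
  induction ha using Submodule.span_induction with
  | mem w hw =>
    obtain ⟨u, v, t, rfl⟩ := hw
    exact Submodule.subset_span ⟨r * u, v * s, t, by noncomm_ring⟩
  | zero => simp only [mul_zero, zero_mul]; exact S.omega.zero_mem
  | add w₁ w₂ _ _ h1 h2 => rw [mul_add, add_mul]; exact S.omega.add_mem h1 h2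
  | smul c w _ h => rw [mul_smul_comm, smul_mul_assoc]; exact S.omega.smul_mem c h

lemma omega_mul_left {a : S.uRes} (ha : a ∈ S.omega) (r : S.uRes) : r * a ∈ S.omega := by
  simpa using S.omega_absorb ha r 1

lemma omega_mul_right {a : S.uRes} (ha : a ∈ S.omega) (r : S.uRes) : a * r ∈ S.omega := by
  simpa using S.omega_absorb ha 1 r

/-- Every element of `u(L)` is a scalar plus an element of the augmentation ideal. -/
lemma exists_decomp (a : S.uRes) : ∃ c : F, ∃ w ∈ S.omega, a = algebraMap F S.uRes c + w := by
  obtain ⟨a, rfl⟩ := S.pi_surjective a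
  induction a using TensorAlgebra.induction with
  | algebraMap r => exact ⟨r, 0, S.omega.zero_mem, by simp⟩
  | ι m => exact ⟨0, S.iota m, S.iota_mem_omega m, by simp [pi_ι]⟩
  | mul u v hu hv =>
    obtain ⟨c1, w1, hw1, h1⟩ := hu
    obtain ⟨c2, w2, hw2, h2⟩ := hv
    refine ⟨c1 * c2, algebraMap F S.uRes c1 * w2 + w1 * algebraMap F S.uRes c2 + w1 * w2,
      S.omega.add_mem (S.omega.add_mem (S.omega_mul_left hw2 _) (S.omega_mul_right hw1 _))
        (S.omega_mul_right hw1 _), ?_⟩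
    rw [map_mul, h1, h2, map_mul]; noncomm_ring
  | add u v hu hv =>
    obtain ⟨c1, w1, hw1, h1⟩ := hu
    obtain ⟨c2, w2, hw2, h2⟩ := hv
    exact ⟨c1 + c2, w1 + w2, S.omega.add_mem hw1 hw2,
      by rw [map_add, h1, h2, map_add, add_add_add_comm]⟩

lemma omega_pow_mul_right {n : ℕ} {a : S.uRes} (ha : a ∈ S.omega ^ (n + 1)) (r : S.uRes) :
    a * r ∈ S.omega ^ (n + 1) := by
  rw [pow_succ] at ha ⊢
  refine Submodule.mul_induction_on ha (fun m hm w hw => ?_) (fun c d hc hd => ?_)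
  · rw [mul_assoc]
    exact Submodule.mul_mem_mul hm (S.omega_mul_right hw r)
  · rw [add_mul]; exact add_mem hc hd

lemma omega_pow_succ_le {n : ℕ} : S.omega ^ (n + 2) ≤ S.omega ^ (n + 1) := by
  intro a ha
  rw [pow_succ] at ha
  refine Submodule.mul_induction_on ha (fun m hm w hw => ?_) (fun c d hc hd => add_mem hc hd)
  exact S.omega_pow_mul_right hm w

lemma omega_pow_le' : ∀ {n m : ℕ}, n ≤ m → S.omega ^ (m + 1) ≤ S.omega ^ (n + 1) := by
  intro n m h
  induction m with
  | zero => rw [Nat.le_zero.mp h]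
  | succ m ih =>
    rcases Nat.eq_or_lt_of_le h with rfl | hlt
    · exact le_rfl
    · exact (S.omega_pow_succ_le).trans (ih (Nat.lt_succ_iff.mp hlt))

lemma omega_pow_le {n m : ℕ} (h1 : 1 ≤ n) (h2 : n ≤ m) : S.omega ^ m ≤ S.omega ^ n := by
  obtain ⟨n', rfl⟩ := Nat.exists_eq_add_of_le h1
  obtain ⟨m', rfl⟩ := Nat.exists_eq_add_of_le (h1.trans h2)
  rw [add_comm 1 n', add_comm 1 m']
  exact S.omega_pow_le' (by omega)

lemma buildHom [Fact p.Prime] [IsLieAbelian L] [CharP F p]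
    {A : Type*} [CommRing A] [Algebra F A] [CharP A p]
    {x y z : L} (hb1 : LinearIndependent F ![x, y, z]) (hb2 : Submodule.span F {x, y, z} = ⊤)
    {α : F} (hx : S.pMap x = α • z) (hy : S.pMap y = z) (hz : S.pMap z = 0)
    (vx vy vz : A) (hvx : vx ^ p = α • vz) (hvy : vy ^ p = vz) (hvz : vz ^ p = 0) :
    ∃ Φ : S.uRes →ₐ[F] A, Φ (S.iota x) = vx ∧ Φ (S.iota y) = vy ∧ Φ (S.iota z) = vz := by
  classical
  let B3 : Module.Basis (Fin 3) F L := Module.Basis.mk hb1 (by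
    have h : Set.range ![x, y, z] = {x, y, z} := by
      ext w; simp [Matrix.range_cons, Matrix.range_empty]; tauto
    rw [h, hb2])
  have hB0 : B3 0 = x := by simp [B3, Module.Basis.mk_apply]
  have hB1 : B3 1 = y := by simp [B3, Module.Basis.mk_apply]
  have hB2 : B3 2 = z := by simp [B3, Module.Basis.mk_apply]
  let f : L →ₗ[F] A := B3.constr F ![vx, vy, vz]
  have hfx : f x = vx := by rw [← hB0]; simpa [f] using B3.constr_basis F ![vx, vy, vz] 0
  have hfy : f y = vy := by rw [← hB1]; simpa [f] using B3.constr_basis F ![vx, vy, vz] 1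
  have hfz : f z = vz := by rw [← hB2]; simpa [f] using B3.constr_basis F ![vx, vy, vz] 2
  let fL : L →ₗ⁅F⁆ A :=
    { f with
      map_lie' := by
        intro a b
        have h1 : ⁅a, b⁆ = (0 : L) := trivial_lie_zero _ _ _ _
        simp only [h1, map_zero, LinearMap.toFun_eq_coe]
        rw [LieRing.of_associative_ring_bracket, mul_comm, sub_self] }
  let g : UniversalEnvelopingAlgebra F L →ₐ[F] A := UniversalEnvelopingAlgebra.lift F fL
  have hgι : ∀ m : L, g (UniversalEnvelopingAlgebra.ι F m) = f m := fun m =>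
    UniversalEnvelopingAlgebra.lift_ι_apply F fL m
  set hmap : L → A := fun v => f (S.pMap v) with hmap_def
  have hadd : ∀ u v : L, hmap (u + v) = hmap u + hmap v := by
    intro u v
    have h := congrArg g (S.jacobson_add u v)
    simp only [map_sub, map_pow, hgι] at h
    rw [map_add, add_pow_char] at h
    have h2 : hmap (u + v) - hmap u - hmap v = 0 := by
      rw [hmap_def]; dsimp only; rw [h]; ring
    linear_combination h2
  have hsmul : ∀ (c : F) (v : L), hmap (c • v) = c ^ p • hmap v := by
    intro c v
    rw [hmap_def]; dsimp only
    rw [S.smul_pow, map_smul]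
  have hmx : hmap x = α • vz := by
    rw [hmap_def]; dsimp only; rw [hx, map_smul, hfz]
  have hmy : hmap y = vz := by rw [hmap_def]; dsimp only; rw [hy, hfz]
  have hmz : hmap z = 0 := by rw [hmap_def]; dsimp only; rw [hz, map_zero]
  have hrel : ∀ a b, S.pRel a b → g a = g b := by
    rintro a b ⟨v, rfl, rfl⟩
    rw [map_pow, hgι, hgι]
    show f v ^ p = hmap v
    have hv : v = B3.repr v 0 • x + B3.repr v 1 • y + B3.repr v 2 • z := by
      have h := B3.sum_repr v
      rw [Fin.sum_univ_three, hB0, hB1, hB2] at h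
      exact h.symm
    rw [hv, map_add, map_add, map_smul, map_smul, map_smul, hfx, hfy, hfz,
      add_pow_char, add_pow_char, _root_.smul_pow, _root_.smul_pow, _root_.smul_pow,
      hvx, hvy, hvz, hadd, hadd, hsmul, hsmul, hsmul, hmx, hmy, hmz]
  refine ⟨RingQuot.liftAlgHom F ⟨g, hrel⟩, ?_, ?_, ?_⟩
  · exact (RingQuot.liftAlgHom_mkAlgHom_apply F g hrel _).trans ((hgι x).trans hfx)
  · exact (RingQuot.liftAlgHom_mkAlgHom_apply F g hrel _).trans ((hgι y).trans hfy)
  · exact (RingQuot.liftAlgHom_mkAlgHom_apply F g hrel _).trans ((hgι z).trans hfz)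

end RestrictedStr

set_option maxHeartbeats 2000000 in
set_option synthInstance.maxHeartbeats 1000000 in
open Pointwise in
theorem Lalpha_no_fm_basis (p : ℕ) [Fact p.Prime] (F L : Type*) [Field F]
    [CharP F p] [LieRing L] [LieAlgebra F L] [FiniteDimensional F L] [IsLieAbelian L]
    (α : F) (hα : ∀ t : F, t ^ p ≠ α)
    (S : RestrictedStr p F L) (x y z : L)
    (hbasis : LinearIndependent F ![x, y, z] ∧ Submodule.span F {x, y, z} = ⊤)
    (hx : S.pMap x = α • z) (hy : S.pMap y = z) (hz : S.pMap z = 0) :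
    ¬ ∃ B : Set S.uRes, IsFMBasis F B := by
  rintro ⟨B, hli, hspanB, hmulB, hrad⟩
  obtain ⟨hb1, hb2⟩ := hbasis
  have hp : p.Prime := Fact.out
  have hp0 : p ≠ 0 := hp.ne_zero
  have hp1 : 1 ≤ p := hp.one_lt.le.trans' (by omega)
  have hp2 : 2 ≤ p := hp.two_le
  letI : CommRing S.uRes := { (inferInstance : Ring S.uRes) with mul_comm := S.uRes_comm }
  -- the augmentation map ε : u(L) → F
  obtain ⟨ε, hεx, hεy, hεz⟩ := S.buildHom hb1 hb2 hx hy hz (0 : F) 0 0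
    (by rw [zero_pow hp0, smul_zero]) (by rw [zero_pow hp0]) (by rw [zero_pow hp0])
  have hεalg : ∀ c : F, ε (algebraMap F S.uRes c) = c := fun c => ε.commutes c
  have hεsurj : Function.Surjective ε := fun c => ⟨algebraMap F S.uRes c, hεalg c⟩
  haveI : Nontrivial S.uRes := ⟨⟨1, 0, fun h => by
    have h1 := congrArg ε h
    rw [map_one, map_zero] at h1
    exact one_ne_zero h1⟩⟩
  have hinj : Function.Injective (algebraMap F S.uRes) := fun a b h => by
    have h1 := congrArg ε h
    rwa [hεalg, hεalg] at h1
  haveI : CharP S.uRes p := charP_of_injective_algebraMap hinj p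
  have hει : ∀ t : L, ε (S.iota t) = 0 := by
    intro t
    have h1 : (ε.toLinearMap ∘ₗ S.iota) t ∈ (⊥ : Submodule F F) :=
      mem_of_span_triple hb2 _ ⊥ (by simpa using hεx) (by simpa using hεy)
        (by simpa using hεz) t
    simpa using h1
  have hεω : ∀ a ∈ S.omega, ε a = 0 := by
    intro a ha
    induction ha using Submodule.span_induction with
    | mem w hw =>
      obtain ⟨u, v, t, rfl⟩ := hw
      rw [map_mul, map_mul, hει, mul_zero, zero_mul]
    | zero => rw [map_zero]
    | add a b _ _ h1 h2 => rw [map_add, h1, h2, add_zero]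
    | smul c a _ h1 => rw [map_smul, h1, smul_zero]
  -- iota is valued in nilpotent elements
  have hnx : IsNilpotent (S.iota x) := ⟨p * p, by
    rw [pow_mul, S.iota_pow, hx, map_smul, _root_.smul_pow, S.iota_pow, hz, map_zero, smul_zero]⟩
  have hny : IsNilpotent (S.iota y) := ⟨p * p, by
    rw [pow_mul, S.iota_pow, hy, S.iota_pow, hz, map_zero]⟩
  have hnz : IsNilpotent (S.iota z) := ⟨p, by rw [S.iota_pow, hz, map_zero]⟩
  have hnil : ∀ t : L, IsNilpotent (S.iota t) := by
    intro t
    let N : Submodule F S.uRes :=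
      { carrier := {a | IsNilpotent a}
        add_mem' := fun ha hb => Commute.isNilpotent_add (Commute.all _ _) ha hb
        zero_mem' := IsNilpotent.zero
        smul_mem' := fun c a ha => ha.smul c }
    exact mem_of_span_triple hb2 S.iota N hnx hny hnz t
  -- the Jacobson radical is ω
  have hωjac : ∀ a ∈ S.omega, a ∈ (⊥ : Ideal S.uRes).jacobson := by
    intro a ha
    induction ha using Submodule.span_induction with
    | mem w hw =>
      obtain ⟨u, v, t, rfl⟩ := hw
      have h1 : S.iota t ∈ (⊥ : Ideal S.uRes).jacobson := by
        rw [Ideal.mem_jacobson_bot]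
        intro r
        exact ((Commute.all _ _).isNilpotent_mul_right (hnil t)).isUnit_add_one
      exact Ideal.mul_mem_right _ _ (Ideal.mul_mem_left _ _ h1)
    | zero => exact zero_mem _
    | add a b _ _ h1 h2 => exact add_mem h1 h2
    | smul c a _ h1 => rw [Algebra.smul_def]; exact Ideal.mul_mem_left _ _ h1
  have hjacω : ∀ a ∈ (⊥ : Ideal S.uRes).jacobson, a ∈ S.omega := by
    intro a ha
    have hmax : (RingHom.ker ε.toRingHom).IsMaximal :=
      RingHom.ker_isMaximal_of_surjective _ hεsurj
    have hle : (⊥ : Ideal S.uRes).jacobson ≤ RingHom.ker ε.toRingHom := by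
      rw [Ideal.jacobson]
      exact sInf_le ⟨bot_le, hmax⟩
    have hker : ε a = 0 := hle ha
    obtain ⟨c, w, hw, rfl⟩ := S.exists_decomp a
    have hc : c = 0 := by rwa [map_add, hεalg, hεω w hw, add_zero] at hker
    rw [hc, map_zero, zero_add]
    exact hw
  have hBω : Submodule.span F (B ∩ (S.omega : Set S.uRes)) = S.omega := by
    have hset : B ∩ (((⊥ : Ideal S.uRes).jacobson : Set S.uRes))
        = B ∩ (S.omega : Set S.uRes) := by
      ext a
      exact ⟨fun h => ⟨h.1, hjacω a h.2⟩, fun h => ⟨h.1, hωjac a h.2⟩⟩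
    have hmod : Submodule.restrictScalars F (⊥ : Ideal S.uRes).jacobson = S.omega := by
      ext a
      exact ⟨fun h => hjacω a h, fun h => hωjac a h⟩
    rw [hset, hmod] at hrad
    exact hrad
  -- B ∩ ω^n spans ω^n
  have hBpow : ∀ n : ℕ,
      Submodule.span F (B ∩ ((S.omega ^ (n + 1) : Submodule F S.uRes) : Set S.uRes))
        = S.omega ^ (n + 1) := by
    intro n
    induction n with
    | zero => simpa [pow_one] using hBω
    | succ n ih =>
      refine le_antisymm (Submodule.span_le.mpr fun a ha => ha.2) ?_
      have h2 : (B ∩ ((S.omega ^ (n + 1) : Submodule F S.uRes) : Set S.uRes))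
            * (B ∩ (S.omega : Set S.uRes))
          ⊆ insert 0 (B ∩ ((S.omega ^ (n + 2) : Submodule F S.uRes) : Set S.uRes)) := by
        intro a ha
        rw [Set.mem_mul] at ha
        obtain ⟨b, hb, b', hb', rfl⟩ := ha
        rcases hmulB b hb.1 b' hb'.1 with h0 | hB'
        · rw [h0]; exact Set.mem_insert 0 _
        · refine Set.mem_insert_of_mem _ ⟨hB', ?_⟩
          show b * b' ∈ S.omega ^ (n + 2)
          rw [pow_succ]
          exact Submodule.mul_mem_mul hb.2 hb'.2
      have h4 : S.omega ^ (n + 2)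
          = Submodule.span F (B ∩ ((S.omega ^ (n + 1) : Submodule F S.uRes) : Set S.uRes))
            * Submodule.span F (B ∩ (S.omega : Set S.uRes)) := by
        rw [ih, hBω, ← pow_succ]
      have h3 : S.omega ^ (n + 2)
          ≤ Submodule.span F
              (insert 0 (B ∩ ((S.omega ^ (n + 2) : Submodule F S.uRes) : Set S.uRes))) := by
        conv_lhs => rw [h4, Submodule.span_mul_span]
        exact Submodule.span_mono h2
      rwa [Submodule.span_insert_zero] at h3
  -- iota z lies in ω²
  have hzω2 : S.iota z ∈ S.omega ^ 2 := by
    have h1 : S.iota z = S.iota y ^ p := by rw [S.iota_pow, hy]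
    have h2 : S.iota y ^ p ∈ S.omega ^ p := by
      have := Submodule.pow_mem_pow S.omega (S.iota_mem_omega y) p
      simpa using this
    rw [h1]
    exact S.omega_pow_le one_le_two hp2 h2
  -- decomposition of elements of ω
  have hsub : ∀ b' ∈ S.omega, ∃ lam mu : F, ∃ w ∈ S.omega ^ 2,
      b' = lam • S.iota x + mu • S.iota y + w := by
    have hιT : ∀ t' : L,
        S.iota t' ∈ Submodule.span F {S.iota x, S.iota y} ⊔ S.omega ^ 2 := by
      intro t'
      refine mem_of_span_triple hb2 S.iota _ ?_ ?_ ?_ t'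
      · exact Submodule.mem_sup_left (Submodule.subset_span (by simp))
      · exact Submodule.mem_sup_left (Submodule.subset_span (by simp))
      · exact Submodule.mem_sup_right hzω2
    have hmul2 : ∀ a b : S.uRes, a ∈ S.omega → b ∈ S.omega → a * b ∈ S.omega ^ 2 := by
      intro a b ha hb; rw [pow_two]; exact Submodule.mul_mem_mul ha hb
    have hT : S.omega ≤ Submodule.span F {S.iota x, S.iota y} ⊔ S.omega ^ 2 := by
      refine Submodule.span_le.mpr ?_
      rintro a ⟨u, v, t, rfl⟩
      obtain ⟨c1, w1, hw1, rfl⟩ := S.exists_decomp u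
      obtain ⟨c2, w2, hw2, rfl⟩ := S.exists_decomp v
      have hid : (algebraMap F S.uRes c1 + w1) * S.iota t * (algebraMap F S.uRes c2 + w2)
          = (c1 * c2) • S.iota t
            + (c1 • (S.iota t * w2) + c2 • (w1 * S.iota t) + w1 * (S.iota t * w2)) := by
        rw [Algebra.smul_def, Algebra.smul_def, Algebra.smul_def, map_mul]
        ring
      rw [hid]
      refine add_mem (Submodule.smul_mem _ _ (hιT t)) (Submodule.mem_sup_right ?_)
      refine add_mem (add_mem
        (Submodule.smul_mem _ _ (hmul2 _ _ (S.iota_mem_omega t) hw2))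
        (Submodule.smul_mem _ _ (hmul2 _ _ hw1 (S.iota_mem_omega t)))) ?_
      exact hmul2 _ _ hw1 (S.omega_mul_right (S.iota_mem_omega t) w2)
    intro b' hb'
    obtain ⟨s, hs, w, hw, hsum⟩ := Submodule.mem_sup.mp (hT hb')
    obtain ⟨lam, mu, hlm⟩ := Submodule.mem_span_pair.mp hs
    exact ⟨lam, mu, w, hw, by rw [← hsum, ← hlm]⟩
  -- the square-zero detector ψ
  haveI : CharP (TrivSqZeroExt F (F × F)) p := charP_of_injective_algebraMap (R := F)
    (by
      have h : (algebraMap F (TrivSqZeroExt F (F × F))) = TrivSqZeroExt.inlHom F (F × F) := rfl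
      rw [h]; exact TrivSqZeroExt.inl_injective) p
  have hinr2 : ∀ m : F × F, (TrivSqZeroExt.inr m : TrivSqZeroExt F (F × F)) ^ p = 0 := by
    intro m
    have h2 : (TrivSqZeroExt.inr m : TrivSqZeroExt F (F × F)) ^ 2 = 0 := by
      rw [pow_two, TrivSqZeroExt.inr_mul_inr]
    have hpe : p = 2 + (p - 2) := by omega
    rw [hpe, pow_add, h2, zero_mul]
  have hvxT : (TrivSqZeroExt.inr ((1 : F), (0 : F)) : TrivSqZeroExt F (F × F)) ^ p
      = α • (0 : TrivSqZeroExt F (F × F)) := by rw [hinr2, smul_zero]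
  have hvyT : (TrivSqZeroExt.inr ((0 : F), (1 : F)) : TrivSqZeroExt F (F × F)) ^ p
      = (0 : TrivSqZeroExt F (F × F)) := hinr2 _
  have hvzT : (0 : TrivSqZeroExt F (F × F)) ^ p = 0 := by rw [zero_pow hp0]
  obtain ⟨Φ, hΦx, hΦy, hΦz⟩ := S.buildHom hb1 hb2 hx hy hz
    (TrivSqZeroExt.inr (1, 0)) (TrivSqZeroExt.inr (0, 1)) 0 hvxT hvyT hvzT
  set ψ : S.uRes →ₗ[F] F × F := (TrivSqZeroExt.sndHom F (F × F)) ∘ₗ Φ.toLinearMap with hψdef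
  have hψx : ψ (S.iota x) = (1, 0) := by simp [hψdef, hΦx]
  have hψy : ψ (S.iota y) = (0, 1) := by simp [hψdef, hΦy]
  have hfst : ∀ a ∈ S.omega, TrivSqZeroExt.fst (Φ a) = 0 := by
    have hfι : ∀ t : L, TrivSqZeroExt.fst (Φ (S.iota t)) = 0 := by
      intro t
      have h1 : ((TrivSqZeroExt.fstHom F F (F × F)).toLinearMap ∘ₗ Φ.toLinearMap ∘ₗ S.iota) t
          ∈ (⊥ : Submodule F F) :=
        mem_of_span_triple hb2 _ ⊥
          (by simp [hΦx]) (by simp [hΦy]) (by simp [hΦz]) t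
      simpa using h1
    intro a ha
    induction ha using Submodule.span_induction with
    | mem w hw =>
      obtain ⟨u, v, t, rfl⟩ := hw
      rw [map_mul, map_mul, TrivSqZeroExt.fst_mul, TrivSqZeroExt.fst_mul, hfι,
        mul_zero, zero_mul]
    | zero => rw [map_zero]; rfl
    | add a b _ _ h1 h2 => rw [map_add, TrivSqZeroExt.fst_add, h1, h2, add_zero]
    | smul c a _ h1 => rw [map_smul, TrivSqZeroExt.fst_smul, h1, smul_zero]
  have hψsq : ∀ a ∈ S.omega ^ 2, ψ a = 0 := by
    intro a ha
    rw [pow_two] at ha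
    refine Submodule.mul_induction_on ha (fun m hm n hn => ?_) (fun c d hc hd => ?_)
    · show TrivSqZeroExt.snd (Φ (m * n)) = 0
      rw [map_mul, TrivSqZeroExt.snd_mul, hfst m hm, hfst n hn]
      simp
    · rw [map_add, hc, hd, add_zero]
  have hψval : ∀ (b' : S.uRes) (lam mu : F) (w : S.uRes), w ∈ S.omega ^ 2 →
      b' = lam • S.iota x + mu • S.iota y + w → ψ b' = (lam, mu) := by
    intro b' lam mu w hw heq
    rw [heq, map_add, map_add, map_smul, map_smul, hψx, hψy, hψsq w hw, add_zero]
    simp [Prod.ext_iff]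
  -- choose b1, b2 in B ∩ ω with distinct nonzero ψ-values
  have hψmem : ∀ u : F × F,
      u ∈ Submodule.map ψ (Submodule.span F (B ∩ (S.omega : Set S.uRes))) := by
    intro u
    rw [hBω]
    refine ⟨u.1 • S.iota x + u.2 • S.iota y,
      add_mem (Submodule.smul_mem _ _ (S.iota_mem_omega x))
        (Submodule.smul_mem _ _ (S.iota_mem_omega y)), ?_⟩
    rw [map_add, map_smul, map_smul, hψx, hψy]
    simp [Prod.ext_iff]
  have hexist : ∃ b1 ∈ B ∩ (S.omega : Set S.uRes), ∃ b2 ∈ B ∩ (S.omega : Set S.uRes),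
      ψ b1 ≠ 0 ∧ ψ b2 ≠ 0 ∧ ψ b1 ≠ ψ b2 := by
    by_cases hE : ∃ b0 ∈ B ∩ (S.omega : Set S.uRes), ψ b0 ≠ 0
    · obtain ⟨b0, hb0, hψb0⟩ := hE
      by_cases hE2 : ∃ b3 ∈ B ∩ (S.omega : Set S.uRes), ψ b3 ≠ 0 ∧ ψ b3 ≠ ψ b0
      · obtain ⟨b3, hb3, h1, h2⟩ := hE2
        exact ⟨b3, hb3, b0, hb0, h1, hψb0, h2⟩
      · exfalso
        push_neg at hE2
        have hsub2 : ψ '' (B ∩ (S.omega : Set S.uRes)) ⊆ {0, ψ b0} := by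
          rintro u ⟨b, hb, rfl⟩
          by_cases h0 : ψ b = 0
          · exact Or.inl h0
          · exact Or.inr (hE2 b hb h0)
        have hsp : ∀ u : F × F, u ∈ Submodule.span F ({0, ψ b0} : Set (F × F)) := by
          intro u
          have h1 := hψmem u
          rw [Submodule.map_span] at h1
          exact Submodule.span_mono hsub2 h1
        have hone := hsp (1, 0)
        have htwo := hsp (0, 1)
        rw [Submodule.span_insert_zero, Submodule.mem_span_singleton] at hone htwo
        obtain ⟨s, hs⟩ := hone
        obtain ⟨t, ht⟩ := htwo
        have hs1 : s * (ψ b0).1 = 1 := by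
          have := congrArg Prod.fst hs; simpa using this
        have hs2 : s * (ψ b0).2 = 0 := by
          have := congrArg Prod.snd hs; simpa using this
        have ht2 : t * (ψ b0).2 = 1 := by
          have := congrArg Prod.snd ht; simpa using this
        have hsne : s ≠ 0 := fun h => by rw [h, zero_mul] at hs1; exact zero_ne_one hs1
        have h20 : (ψ b0).2 = 0 := by
          rcases mul_eq_zero.mp hs2 with h | h
          · exact absurd h hsne
          · exact h
        rw [h20, mul_zero] at ht2
        exact zero_ne_one ht2
    · exfalso
      push_neg at hE
      have h1 := hψmem (1, 0)
      rw [Submodule.map_span] at h1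
      have h2 : ψ '' (B ∩ (S.omega : Set S.uRes)) ⊆ {0} := by
        rintro u ⟨b, hb, rfl⟩
        exact hE b hb
      have h3 := Submodule.span_mono h2 h1
      rw [Submodule.span_zero_singleton] at h3
      simp only [Submodule.mem_bot, Prod.ext_iff] at h3
      exact one_ne_zero h3.1
  -- the Kummer extension detector
  have hirr : Irreducible ((Polynomial.X : Polynomial F) ^ p - Polynomial.C α) :=
    X_pow_sub_C_irreducible_of_prime hp hα
  haveI hfactirr : Fact (Irreducible ((Polynomial.X : Polynomial F) ^ p - Polynomial.C α)) :=
    ⟨hirr⟩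
  set K := AdjoinRoot ((Polynomial.X : Polynomial F) ^ p - Polynomial.C α) with hKdef
  haveI : CharP K p := charP_of_injective_algebraMap (algebraMap F K).injective p
  set I2 : Ideal (Polynomial K) := Ideal.span {(Polynomial.X : Polynomial K) ^ (p + 1)}
    with hI2def
  haveI : Nontrivial (Polynomial K ⧸ I2) := by
    refine Ideal.Quotient.nontrivial_iff.mpr ?_
    rw [hI2def, Ne, Ideal.span_singleton_eq_top]
    intro h
    have hp1' : p + 1 - 1 + 1 = p + 1 := by omega
    exact Polynomial.not_isUnit_X ((isUnit_pow_iff (Nat.succ_ne_zero p)).mp h)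
  haveI : CharP (Polynomial K ⧸ I2) p :=
    charP_of_injective_algebraMap (algebraMap F (Polynomial K ⧸ I2)).injective p
  set t2 : Polynomial K ⧸ I2 := Ideal.Quotient.mk I2 Polynomial.X with ht2def
  set β : K := AdjoinRoot.root ((Polynomial.X : Polynomial F) ^ p - Polynomial.C α) with hβdef
  have hβ : β ^ p = algebraMap F K α := by
    rw [hβdef, AdjoinRoot.algebraMap_eq]
    exact root_X_pow_sub_C_pow p α
  have halgA2 : ∀ c : F, algebraMap F (Polynomial K ⧸ I2) c
      = Ideal.Quotient.mk I2 (Polynomial.C (algebraMap F K c)) := by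
    intro c
    have h1 : algebraMap F (Polynomial K ⧸ I2) c
        = Ideal.Quotient.mk I2 (algebraMap F (Polynomial K) c) := rfl
    rw [h1, Polynomial.algebraMap_apply]
  have hsd : α • t2 ^ p = algebraMap F (Polynomial K ⧸ I2) α * t2 ^ p :=
    Algebra.smul_def α (t2 ^ p)
  have hvx2 : (Ideal.Quotient.mk I2 (Polynomial.C β * Polynomial.X)) ^ p = α • t2 ^ p := by
    rw [hsd, halgA2, ht2def, ← map_pow, ← map_pow, ← map_mul, mul_pow,
      ← Polynomial.C_pow, hβ]
  have hvz2 : (t2 ^ p) ^ p = 0 := by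
    rw [ht2def, ← map_pow, ← map_pow, Ideal.Quotient.eq_zero_iff_mem, hI2def,
      Ideal.mem_span_singleton]
    refine (pow_dvd_pow _ ?_).trans (dvd_of_eq (by rw [← pow_mul]))
    have h1 : 2 * p ≤ p * p := Nat.mul_le_mul_right p hp2
    omega
  obtain ⟨Φ2, hΦ2x, hΦ2y, hΦ2z⟩ := S.buildHom hb1 hb2 hx hy hz
    (Ideal.Quotient.mk I2 (Polynomial.C β * Polynomial.X)) t2 (t2 ^ p) hvx2 rfl hvz2
  have ht2ne : t2 ^ p ≠ 0 := by
    intro h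
    rw [ht2def, ← map_pow, Ideal.Quotient.eq_zero_iff_mem, hI2def,
      Ideal.mem_span_singleton] at h
    have h2 := Polynomial.natDegree_le_of_dvd h (pow_ne_zero _ Polynomial.X_ne_zero)
    simp only [Polynomial.natDegree_pow, Polynomial.natDegree_X, mul_one] at h2
    omega
  have hImem : ∀ a ∈ S.omega, Φ2 a ∈ Ideal.span {t2} := by
    have hιI : ∀ t : L, Φ2 (S.iota t) ∈ Ideal.span {t2} := by
      intro t
      have h1 : (Φ2.toLinearMap ∘ₗ S.iota) t
          ∈ Submodule.restrictScalars F (Ideal.span {t2}) := by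
        refine mem_of_span_triple hb2 _ _ ?_ ?_ ?_ t
        · show Φ2 (S.iota x) ∈ Ideal.span {t2}
          rw [hΦ2x, Ideal.mem_span_singleton, ht2def]
          exact ⟨Ideal.Quotient.mk I2 (Polynomial.C β), by rw [← map_mul, mul_comm]⟩
        · show Φ2 (S.iota y) ∈ Ideal.span {t2}
          rw [hΦ2y]
          exact Ideal.subset_span rfl
        · show Φ2 (S.iota z) ∈ Ideal.span {t2}
          rw [hΦ2z, Ideal.mem_span_singleton]
          exact dvd_pow_self t2 hp0
      exact h1
    intro a ha
    induction ha using Submodule.span_induction with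
    | mem w hw =>
      obtain ⟨u, v, t, rfl⟩ := hw
      rw [map_mul, map_mul]
      exact Ideal.mul_mem_right _ _ (Ideal.mul_mem_left _ _ (hιI t))
    | zero => rw [map_zero]; exact zero_mem _
    | add a b _ _ h1 h2 => rw [map_add]; exact add_mem h1 h2
    | smul c a _ h1 =>
      rw [map_smul]
      exact Submodule.smul_of_tower_mem _ c h1
  have hIpow : ∀ n : ℕ, ∀ a ∈ S.omega ^ (n + 1), Φ2 a ∈ (Ideal.span {t2}) ^ (n + 1) := by
    intro n
    induction n with
    | zero =>
      intro a ha
      rw [zero_add]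
      rw [zero_add, pow_one] at ha
      exact (congrArg (fun J : Ideal _ => Φ2 a ∈ J) (pow_one (Ideal.span {t2}))).mpr (hImem a ha)
    | succ n ih =>
      intro a ha
      rw [pow_succ] at ha
      refine Submodule.mul_induction_on ha (fun m hm w hw => ?_) (fun c d hc hd => ?_)
      · rw [map_mul]
        exact (congrArg (fun J : Ideal _ => Φ2 m * Φ2 w ∈ J) (pow_succ (Ideal.span {t2}) (n + 1))).mpr
          (Submodule.mul_mem_mul (ih m hm) (hImem w hw))
      · rw [map_add]; exact add_mem hc hd
  have hzdet : ∀ c : F, c • S.iota z ∈ S.omega ^ (p + 1) → c = 0 := by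
    intro c hc
    have h1 : Φ2 (c • S.iota z) ∈ (Ideal.span {t2}) ^ (p + 1) := hIpow p _ hc
    have h2 : (Ideal.span {t2} : Ideal (Polynomial K ⧸ I2)) ^ (p + 1) = ⊥ := by
      rw [Ideal.span_singleton_pow, Ideal.span_singleton_eq_bot, ht2def, ← map_pow,
        Ideal.Quotient.eq_zero_iff_mem, hI2def]
      exact Ideal.subset_span rfl
    rw [h2, Ideal.mem_bot, map_smul, hΦ2z] at h1
    by_contra hc0
    apply ht2ne
    calc t2 ^ p = c⁻¹ • (c • t2 ^ p) := by
          rw [smul_smul, inv_mul_cancel₀ hc0, one_smul]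
      _ = 0 := by rw [h1, smul_zero]
  -- the key scalar fact
  have hclaim : ∀ lam mu : F, ¬(lam = 0 ∧ mu = 0) → lam ^ p * α + mu ^ p ≠ 0 := by
    intro lam mu hne h0
    by_cases hl : lam = 0
    · rw [hl, zero_pow hp0, zero_mul, zero_add] at h0
      exact hne ⟨hl, pow_eq_zero_iff hp0 |>.mp h0⟩
    · have hlp : lam ^ p ≠ 0 := pow_ne_zero _ hl
      refine hα (-mu / lam) ?_
      have hneg : (-mu : F) ^ p = -(mu ^ p) := by
        rw [neg_eq_neg_one_mul, mul_pow, neg_one_pow_char F p, neg_one_mul]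
      rw [div_pow, hneg]
      have hμ : mu ^ p = -(lam ^ p * α) := by linear_combination h0
      rw [hμ, neg_neg, mul_comm, mul_div_assoc, div_self hlp, mul_one]
  -- p-th powers of elements of ω
  have hbp : ∀ (b' : S.uRes) (lam mu : F) (w : S.uRes), w ∈ S.omega ^ 2 →
      b' = lam • S.iota x + mu • S.iota y + w →
      b' ^ p = (lam ^ p * α + mu ^ p) • S.iota z + w ^ p := by
    intro b' lam mu w _ heq
    rw [heq, add_pow_char, add_pow_char, _root_.smul_pow, _root_.smul_pow,
      S.iota_pow, S.iota_pow, hx, hy, map_smul, smul_smul, add_smul]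
  have hw2p : ∀ w ∈ S.omega ^ 2, w ^ p ∈ S.omega ^ (p + 1) := by
    intro w hw
    have h1 : w ^ p ∈ S.omega ^ (2 * p) := by
      have h2 := Submodule.pow_mem_pow _ hw p
      rwa [← pow_mul] at h2
    exact S.omega_pow_le (by omega) (by omega) h1
  have hpowB : ∀ b' ∈ B, ∀ n : ℕ, 1 ≤ n → b' ^ n ∈ B ∨ b' ^ n = 0 := by
    intro b' hb' n hn
    induction n with
    | zero => omega
    | succ n ih =>
      by_cases h0 : n = 0
      · subst h0; rw [pow_one]; exact Or.inl hb'
      · have hn' : 1 ≤ n := by omega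
        rcases ih hn' with h | h
        · rw [pow_succ]
          rcases hmulB _ h _ hb' with h1 | h1
          · exact Or.inr h1
          · exact Or.inl h1
        · right; rw [pow_succ, h, zero_mul]
  -- independence tool
  have hBle : ∀ e : S.uRes, e ∉ S.omega ^ (p + 1) →
      S.omega ^ (p + 1) ≤ Submodule.span F (B \ {e}) := by
    intro e he
    rw [← hBpow p]
    refine Submodule.span_mono ?_
    rintro a ⟨haB, haω⟩
    exact ⟨haB, fun hae => he (Set.mem_singleton_iff.mp hae ▸ haω)⟩
  have hsingle : ∀ e ∈ B, ∀ c : F, c • e ∈ Submodule.span F (B \ {e}) → c = 0 := by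
    intro e he c hc
    by_contra hc0
    have h1 : e ∈ Submodule.span F (B \ {e}) := by
      have h2 := Submodule.smul_mem (Submodule.span F (B \ {e})) c⁻¹ hc
      rwa [smul_smul, inv_mul_cancel₀ hc0, one_smul] at h2
    have h3 : ((↑) : B → S.uRes) '' {b : B | (b : S.uRes) ≠ e} = B \ {e} := by
      ext a
      constructor
      · rintro ⟨⟨a0, ha0⟩, hne, rfl⟩
        exact ⟨ha0, hne⟩
      · rintro ⟨haB, hane⟩
        exact ⟨⟨a, haB⟩, hane, rfl⟩
    exact hli.notMem_span_image (x := ⟨e, he⟩) (by simp) (h3 ▸ h1)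
  -- the final contradiction
  obtain ⟨b1, hb1m, b2, hb2m, hψ1ne, hψ2ne, hψ12⟩ := hexist
  obtain ⟨lam1, mu1, w1, hw1, heq1⟩ := hsub b1 hb1m.2
  obtain ⟨lam2, mu2, w2, hw2, heq2⟩ := hsub b2 hb2m.2
  have hψv1 : ψ b1 = (lam1, mu1) := hψval b1 lam1 mu1 w1 hw1 heq1
  have hψv2 : ψ b2 = (lam2, mu2) := hψval b2 lam2 mu2 w2 hw2 heq2
  have hne1 : ¬(lam1 = 0 ∧ mu1 = 0) := by
    rintro ⟨h1, h2⟩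
    exact hψ1ne (by rw [hψv1, h1, h2]; rfl)
  have hne2 : ¬(lam2 = 0 ∧ mu2 = 0) := by
    rintro ⟨h1, h2⟩
    exact hψ2ne (by rw [hψv2, h1, h2]; rfl)
  have hc1 := hclaim lam1 mu1 hne1
  have hc2 := hclaim lam2 mu2 hne2
  have he1 : b1 ^ p = (lam1 ^ p * α + mu1 ^ p) • S.iota z + w1 ^ p :=
    hbp b1 lam1 mu1 w1 hw1 heq1
  have he2 : b2 ^ p = (lam2 ^ p * α + mu2 ^ p) • S.iota z + w2 ^ p :=
    hbp b2 lam2 mu2 w2 hw2 heq2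
  have hnin1 : b1 ^ p ∉ S.omega ^ (p + 1) := by
    intro hmem
    have h1 : (lam1 ^ p * α + mu1 ^ p) • S.iota z ∈ S.omega ^ (p + 1) := by
      have h2 : (lam1 ^ p * α + mu1 ^ p) • S.iota z = b1 ^ p - w1 ^ p := by
        rw [he1, add_sub_cancel_right]
      rw [h2]
      exact sub_mem hmem (hw2p w1 hw1)
    exact hc1 (hzdet _ h1)
  have hnin2 : b2 ^ p ∉ S.omega ^ (p + 1) := by
    intro hmem
    have h1 : (lam2 ^ p * α + mu2 ^ p) • S.iota z ∈ S.omega ^ (p + 1) := by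
      have h2 : (lam2 ^ p * α + mu2 ^ p) • S.iota z = b2 ^ p - w2 ^ p := by
        rw [he2, add_sub_cancel_right]
      rw [h2]
      exact sub_mem hmem (hw2p w2 hw2)
    exact hc2 (hzdet _ h1)
  have hB1 : b1 ^ p ∈ B := by
    rcases hpowB b1 hb1m.1 p hp1 with h | h
    · exact h
    · exact absurd (by rw [h]; exact zero_mem _) hnin1
  have hB2 : b2 ^ p ∈ B := by
    rcases hpowB b2 hb2m.1 p hp1 with h | h
    · exact h
    · exact absurd (by rw [h]; exact zero_mem _) hnin2
  have hdiff : (lam2 ^ p * α + mu2 ^ p) • b1 ^ p - (lam1 ^ p * α + mu1 ^ p) • b2 ^ p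
      ∈ S.omega ^ (p + 1) := by
    rw [he1, he2]
    have hcalc : (lam2 ^ p * α + mu2 ^ p) • ((lam1 ^ p * α + mu1 ^ p) • S.iota z + w1 ^ p)
        - (lam1 ^ p * α + mu1 ^ p) • ((lam2 ^ p * α + mu2 ^ p) • S.iota z + w2 ^ p)
        = (lam2 ^ p * α + mu2 ^ p) • w1 ^ p - (lam1 ^ p * α + mu1 ^ p) • w2 ^ p := by
      module
    rw [hcalc]
    exact sub_mem (Submodule.smul_mem _ _ (hw2p w1 hw1))
      (Submodule.smul_mem _ _ (hw2p w2 hw2))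
  by_cases heqp : b1 ^ p = b2 ^ p
  · have h1 : ((lam2 ^ p * α + mu2 ^ p) - (lam1 ^ p * α + mu1 ^ p)) • b2 ^ p
        ∈ Submodule.span F (B \ {b2 ^ p}) := by
      apply hBle _ hnin2
      have hdiff' := hdiff
      rw [heqp] at hdiff'
      rw [sub_smul]
      exact hdiff'
    have h2 := hsingle _ hB2 _ h1
    have h3 : ¬(lam1 - lam2 = 0 ∧ mu1 - mu2 = 0) := by
      rintro ⟨ha, hb⟩
      apply hψ12
      rw [hψv1, hψv2, sub_eq_zero.mp ha, sub_eq_zero.mp hb]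
    refine hclaim (lam1 - lam2) (mu1 - mu2) h3 ?_
    rw [sub_pow_char, sub_pow_char]
    linear_combination -h2
  · have h1 : (lam2 ^ p * α + mu2 ^ p) • b1 ^ p ∈ Submodule.span F (B \ {b1 ^ p}) := by
      have h2 : (lam2 ^ p * α + mu2 ^ p) • b1 ^ p
          = (lam1 ^ p * α + mu1 ^ p) • b2 ^ p
            + ((lam2 ^ p * α + mu2 ^ p) • b1 ^ p - (lam1 ^ p * α + mu1 ^ p) • b2 ^ p) := by
        abel
      rw [h2]
      refine add_mem ?_ (hBle _ hnin1 hdiff)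
      refine Submodule.smul_mem _ _ (Submodule.subset_span ?_)
      exact ⟨hB2, fun hmem => heqp (Set.mem_singleton_iff.mp hmem).symm⟩
    exact hc2 (hsingle _ hB1 _ h1)
end

section
/- Let L be a finite-dimensional p-nilpotent restricted Lie algebra over a field F of characteristic p, and let {xᵢ} be an ordered basis of L adapted to the dimension subalgebras, i.e., 𝔇_m(L) = span_F{xᵢ : ν(xᵢ) ≥ m} for all m ≥ 1, where ν(x) is the largest m with x ∈ 𝔇_m(L). Then for each n ≥ 1, ω(L)^n = span_F of all PBW monomials x_{i₁}^{α₁}⋯x_{i_l}^{α_l} with i₁ < ⋯ < i_l, 0 ≤ α_j ≤ p−1, and Σ_j α_j ν(x_{i_j}) ≥ n. -/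
section Restricted

variable (p : ℕ) (F : Type*) (L : Type*) [Field F] [LieRing L] [LieAlgebra F L]

variable {p F L}

namespace RestrictedStr

variable (S : RestrictedStr p F L)

attribute [local instance] LieRing.ofAssociativeRing

end RestrictedStr

end Restricted

/-- The `m`-th dimension subalgebra `𝔇_m(L) = L ∩ ω(L)^m`, as an `F`-submodule of `L`. -/
noncomputable def RestrictedStr.dimSub {p : ℕ} {F L : Type*} [Field F] [LieRing L]
    [LieAlgebra F L] (S : RestrictedStr p F L) (m : ℕ) : Submodule F L :=
  Submodule.comap S.iota (S.omega ^ m)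

/-! ### Auxiliary development -/

namespace JenningsAux

open List Submodule

variable {p : ℕ} {F L : Type*} [Field F] [LieRing L] [LieAlgebra F L]
variable (S : RestrictedStr p F L)

theorem iota_apply (x : L) :
    S.iota x = RingQuot.mkAlgHom F S.pRel (UniversalEnvelopingAlgebra.ι F x) := rfl

theorem iota_pow_p (x : L) : S.iota x ^ p = S.iota (S.pMap x) := by
  rw [iota_apply, iota_apply]
  exact (map_pow (RingQuot.mkAlgHom F S.pRel) _ p).symm.trans
    (RingQuot.mkAlgHom_rel F ⟨x, rfl, rfl⟩)

attribute [local instance] LieRing.ofAssociativeRing in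
theorem iota_bracket (x y : L) :
    S.iota ⁅x, y⁆ = S.iota x * S.iota y - S.iota y * S.iota x := by
  rw [iota_apply, iota_apply, iota_apply, LieHom.map_lie, Ring.lie_def, map_sub, map_mul, map_mul]
  rfl

theorem iota_mem_omega (x : L) : S.iota x ∈ S.omega :=
  subset_span ⟨1, 1, x, by simp⟩

theorem omega_mul_right (a c : S.uRes) (ha : a ∈ S.omega) : a * c ∈ S.omega := by
  induction ha using Submodule.span_induction with
  | mem a h => obtain ⟨u, v, x, rfl⟩ := h; exact subset_span ⟨u, v * c, x, by rw [mul_assoc]⟩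
  | zero => rw [zero_mul]; exact zero_mem _
  | add x y _ _ hx hy => rw [add_mul]; exact add_mem hx hy
  | smul r x _ hx => rw [smul_mul_assoc]; exact smul_mem _ _ hx

theorem omega_mul_le : S.omega * S.omega ≤ S.omega :=
  Submodule.mul_le.2 fun a ha b _ => omega_mul_right S a b ha

theorem omega_pow_mul_omega_le (n : ℕ) (hn : 1 ≤ n) :
    S.omega ^ n * S.omega ≤ S.omega ^ n := by
  obtain ⟨m, rfl⟩ := Nat.exists_eq_add_of_le hn
  rw [add_comm, pow_succ, mul_assoc]
  exact mul_le_mul_right (omega_mul_le S) _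

theorem omega_pow_le {n k : ℕ} (hn : 1 ≤ n) (hk : n ≤ k) : S.omega ^ k ≤ S.omega ^ n := by
  induction k, hk using Nat.le_induction with
  | base => exact le_rfl
  | succ k hk ih =>
    rw [pow_succ]
    exact le_trans (mul_le_mul_right le_rfl _ |>.trans
      (omega_pow_mul_omega_le S k (le_trans hn hk))) ih

theorem mem_dimSub {x : L} {m : ℕ} : x ∈ S.dimSub m ↔ S.iota x ∈ S.omega ^ m := Iff.rfl


section Words

variable {N : ℕ} (bs : Module.Basis (Fin N) F L) (h : Fin N → ℕ)

/-- The images of the basis elements in `u(L)`. -/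
noncomputable def yy (j : Fin N) : S.uRes := S.iota (bs j)

/-- Weight of a word. -/
def wt (ℓ : List (Fin N)) : ℕ := (ℓ.map h).sum

/-- Product of a word. -/
noncomputable def wp (ℓ : List (Fin N)) : S.uRes := (ℓ.map (yy S bs)).prod

/-- Set of PBW monomials of weight at least `n`. -/
def Mset (n : ℕ) : Set S.uRes :=
  {a : S.uRes | ∃ α : Fin N → ℕ, (∀ j, α j ≤ p - 1) ∧
    n ≤ ∑ j : Fin N, α j * h j ∧
    a = ((List.finRange N).map fun j => S.iota (bs j) ^ α j).prod}

/-- Span of PBW monomials of weight at least `n`. -/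
noncomputable def MM (n : ℕ) : Submodule F S.uRes := Submodule.span F (Mset S bs h n)

theorem Mset_anti {m n : ℕ} (hmn : m ≤ n) : Mset S bs h n ⊆ Mset S bs h m :=
  fun _ ⟨α, h1, h2, h3⟩ => ⟨α, h1, le_trans hmn h2, h3⟩

theorem MM_anti {m n : ℕ} (hmn : m ≤ n) : MM S bs h n ≤ MM S bs h m :=
  span_mono (Mset_anti S bs h hmn)

@[simp] theorem wp_nil : wp S bs ([] : List (Fin N)) = 1 := rfl

@[simp] theorem wp_cons (a : Fin N) (ℓ : List (Fin N)) :
    wp S bs (a :: ℓ) = yy S bs a * wp S bs ℓ := by simp [wp]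

@[simp] theorem wp_append (ℓ₁ ℓ₂ : List (Fin N)) :
    wp S bs (ℓ₁ ++ ℓ₂) = wp S bs ℓ₁ * wp S bs ℓ₂ := by simp [wp]

@[simp] theorem wp_replicate (k : ℕ) (j : Fin N) :
    wp S bs (List.replicate k j) = yy S bs j ^ k := by simp [wp]

@[simp] theorem wt_nil : wt h ([] : List (Fin N)) = 0 := rfl

@[simp] theorem wt_cons (a : Fin N) (ℓ : List (Fin N)) :
    wt h (a :: ℓ) = h a + wt h ℓ := by simp [wt]

@[simp] theorem wt_append (ℓ₁ ℓ₂ : List (Fin N)) :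
    wt h (ℓ₁ ++ ℓ₂) = wt h ℓ₁ + wt h ℓ₂ := by simp [wt]

@[simp] theorem wt_replicate (k : ℕ) (j : Fin N) :
    wt h (List.replicate k j) = k * h j := by simp [wt, List.sum_replicate, smul_eq_mul]

theorem wt_perm {ℓ₁ ℓ₂ : List (Fin N)} (hp : ℓ₁.Perm ℓ₂) : wt h ℓ₁ = wt h ℓ₂ :=
  (hp.map h).sum_eq

/-- The canonical (sorted) list with multiplicities `α`. -/
def canonList (α : Fin N → ℕ) : List (Fin N) :=
  (List.finRange N).flatMap fun j => List.replicate (α j) j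

theorem wp_canonList (α : Fin N → ℕ) :
    wp S bs (canonList α) = ((List.finRange N).map fun j => yy S bs j ^ α j).prod := by
  rw [wp, canonList, List.map_flatMap]
  simp only [List.map_replicate]
  rw [List.flatMap_def, List.prod_flatten, List.map_map]
  simp [Function.comp_def, List.prod_replicate]

theorem wt_canonList (α : Fin N → ℕ) :
    wt h (canonList α) = ∑ j : Fin N, α j * h j := by
  rw [wt, canonList, List.map_flatMap]
  simp only [List.map_replicate]
  rw [List.flatMap_def, List.sum_flatten, List.map_map]
  rw [Fin.sum_univ_def]
  simp [Function.comp_def, List.sum_replicate, smul_eq_mul]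

theorem canonList_sorted (α : Fin N → ℕ) : (canonList α).Pairwise (· ≤ ·) := by
  rw [canonList, List.flatMap_def, List.pairwise_flatten]
  constructor
  · intro l hl
    simp only [List.mem_map] at hl
    obtain ⟨j, -, rfl⟩ := hl
    exact List.pairwise_replicate.2 (Or.inr le_rfl)
  · rw [List.pairwise_map]
    refine (List.pairwise_lt_finRange N).imp_of_mem ?_
    intro a b _ _ hab x hx y hy
    rw [List.eq_of_mem_replicate hx, List.eq_of_mem_replicate hy]
    exact le_of_lt hab

theorem count_canonList (α : Fin N → ℕ) (a : Fin N) :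
    (canonList α).count a = α a := by
  rw [canonList, List.count_flatMap]
  have : ∀ j : Fin N, (List.count a ∘ fun j => List.replicate (α j) j) j
      = if a = j then α j else 0 := by
    intro j
    simp only [Function.comp_apply, List.count_replicate]
    rcases eq_or_ne a j with rfl | hne
    · simp
    · simp [hne, Ne.symm hne]
  rw [List.map_congr_left fun j _ => this j, ← Fin.sum_univ_def, Finset.sum_ite_eq]
  simp

theorem sorted_eq_canonList {ℓ : List (Fin N)} (hs : ℓ.Pairwise (· ≤ ·)) :
    ℓ = canonList fun j => ℓ.count j := by
  refine List.Perm.eq_of_pairwise' hs (canonList_sorted _) ?_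
  rw [List.perm_iff_count]
  intro a
  rw [count_canonList]

end Words


section Inversions

variable {N : ℕ}

/-- Number of inversions of a word. -/
def inv : List (Fin N) → ℕ
  | [] => 0
  | a :: t => t.countP (fun x => decide (x < a)) + inv t

theorem inv_swap (A B : List (Fin N)) {a b : Fin N} (hba : b < a) :
    inv (A ++ b :: a :: B) + 1 = inv (A ++ a :: b :: B) := by
  induction A with
  | nil =>
    simp only [List.nil_append, inv, List.countP_cons]
    have h1 : ¬ (a < b) := asymm hba
    simp only [decide_eq_true_eq, h1, hba, if_true, if_false]
    omega
  | cons x A ih =>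
    have hperm : (A ++ b :: a :: B).Perm (A ++ a :: b :: B) :=
      List.Perm.append_left A (List.Perm.swap a b B)
    simp only [List.cons_append, inv, List.append_eq]
    rw [hperm.countP_eq]
    omega

theorem exists_desc {ℓ : List (Fin N)} (hl : ¬ ℓ.Pairwise (· ≤ ·)) :
    ∃ (A B : List (Fin N)) (a b : Fin N), ℓ = A ++ a :: b :: B ∧ b < a := by
  induction ℓ with
  | nil => exact absurd List.Pairwise.nil hl
  | cons x t ih =>
    by_cases ht : t.Pairwise (· ≤ ·)
    · match t, ht with
      | [], _ => exact absurd (List.pairwise_singleton _ x) hl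
      | y :: t', ht =>
        by_cases hxy : x ≤ y
        · refine absurd (List.pairwise_cons.2 ⟨?_, ht⟩) hl
          intro b hb
          rcases List.mem_cons.1 hb with rfl | hb
          · exact hxy
          · exact le_trans hxy ((List.pairwise_cons.1 ht).1 b hb)
        · exact ⟨[], t', x, y, by simp, lt_of_not_ge hxy⟩
    · obtain ⟨A, B, a, b, heq, hba⟩ := ih ht
      exact ⟨x :: A, B, a, b, by rw [heq]; rfl, hba⟩

end Inversions


theorem prod_map_single {N : ℕ} {M : Type*} [Monoid M] (f : Fin N → M) (j : Fin N)
    (hf : ∀ i, i ≠ j → f i = 1) :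
    ∀ l : List (Fin N), (l.map f).prod = f j ^ l.count j := by
  intro l
  induction l with
  | nil => simp
  | cons x t ih =>
    rcases eq_or_ne x j with rfl | hx
    · rw [List.map_cons, List.prod_cons, ih, List.count_cons_self, pow_succ']
    · rw [List.map_cons, List.prod_cons, ih, hf x hx, one_mul,
        List.count_cons_of_ne hx]

section Heights

variable {N : ℕ} (bs : Module.Basis (Fin N) F L) (h : Fin N → ℕ)

theorem mem_span_yy (hadapted : ∀ m : ℕ, 1 ≤ m →
      S.dimSub m = Submodule.span F (bs '' {i : Fin N | m ≤ h i}))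
    {m : ℕ} (hm : 1 ≤ m) {z : L} (hz : z ∈ S.dimSub m) :
    S.iota z ∈ Submodule.span F (yy S bs '' {c : Fin N | m ≤ h c}) := by
  rw [hadapted m hm] at hz
  have : S.iota z ∈ Submodule.map S.iota (Submodule.span F (bs '' {i : Fin N | m ≤ h i})) :=
    Submodule.mem_map_of_mem hz
  rwa [Submodule.map_span, ← Set.image_comp] at this

theorem h_pos (hheight : ∀ i, bs i ∈ S.dimSub (h i) ∧ bs i ∉ S.dimSub (h i + 1)) (i : Fin N) :
    1 ≤ h i := by
  by_contra hc
  have h0 : h i = 0 := by omega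
  refine (hheight i).2 ?_
  rw [h0, mem_dimSub, pow_one]
  exact iota_mem_omega S (bs i)

theorem bracket_mem (hheight : ∀ i, bs i ∈ S.dimSub (h i) ∧ bs i ∉ S.dimSub (h i + 1))
    (a b : Fin N) : ⁅bs a, bs b⁆ ∈ S.dimSub (h a + h b) := by
  rw [mem_dimSub, iota_bracket]
  have ha : S.iota (bs a) ∈ S.omega ^ h a := (hheight a).1
  have hb : S.iota (bs b) ∈ S.omega ^ h b := (hheight b).1
  refine sub_mem ?_ ?_
  · rw [pow_add]; exact Submodule.mul_mem_mul ha hb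
  · rw [add_comm, pow_add]; exact Submodule.mul_mem_mul hb ha

theorem pMap_mem (hheight : ∀ i, bs i ∈ S.dimSub (h i) ∧ bs i ∉ S.dimSub (h i + 1))
    (j : Fin N) : S.pMap (bs j) ∈ S.dimSub (p * h j) := by
  rw [mem_dimSub, ← iota_pow_p]
  rw [mul_comm, pow_mul]
  exact Submodule.pow_mem_pow _ (hheight j).1 p

theorem sorted_wp_mem [Fact p.Prime] {ℓ : List (Fin N)} (hs : ℓ.Pairwise (· ≤ ·))
    (hc : ∀ j, ℓ.count j < p) : wp S bs ℓ ∈ Mset S bs h (wt h ℓ) := by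
  have hcanon := sorted_eq_canonList hs
  refine ⟨fun j => ℓ.count j, ?_, ?_, ?_⟩
  · intro j
    have h2 := hc j
    have := (Fact.out : p.Prime).two_le
    show ℓ.count j ≤ p - 1
    omega
  · rw [← wt_canonList (h := h), ← hcanon]
  · conv_lhs => rw [hcanon]
    rw [wp_canonList]
    simp only [yy]

theorem one_mem_Mset : (1 : S.uRes) ∈ Mset S bs h 0 := by
  refine ⟨fun _ => 0, fun _ => Nat.zero_le _, Nat.zero_le _, ?_⟩
  simp

theorem yy_mem_Mset [Fact p.Prime] (j : Fin N) : yy S bs j ∈ Mset S bs h (h j) := by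
  refine ⟨fun i => if i = j then 1 else 0, ?_, ?_, ?_⟩
  · intro i
    have := (Fact.out : p.Prime).two_le
    show (if i = j then 1 else 0) ≤ p - 1
    split <;> omega
  · have : (∑ i : Fin N, (if i = j then 1 else 0) * h i) = h j := by
      simp [ite_mul]
    exact le_of_eq this.symm
  · rw [prod_map_single (fun i => S.iota (bs i) ^ if i = j then 1 else 0) j
      (fun i hi => by simp [if_neg hi])]
    rw [List.count_eq_one_of_mem (List.nodup_finRange N) (List.mem_finRange j)]
    simp [yy]

end Heights


section Key

variable {N : ℕ} (bs : Module.Basis (Fin N) F L) (h : Fin N → ℕ) [Fact p.Prime]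

theorem key
    (hheight : ∀ i, bs i ∈ S.dimSub (h i) ∧ bs i ∉ S.dimSub (h i + 1))
    (hadapted : ∀ m : ℕ, 1 ≤ m →
      S.dimSub m = Submodule.span F (bs '' {i : Fin N | m ≤ h i})) :
    ∀ ℓ : List (Fin N), wp S bs ℓ ∈ MM S bs h (wt h ℓ) := by
  have hp2 := (Fact.out : p.Prime).two_le
  have main : ∀ k, ∀ ℓ : List (Fin N), ℓ.length ≤ k → wp S bs ℓ ∈ MM S bs h (wt h ℓ) := by
    intro k
    induction k with
    | zero =>
      intro ℓ hlen
      have hnil : ℓ = [] := List.eq_nil_of_length_eq_zero (Nat.le_zero.1 hlen)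
      subst hnil
      simpa [MM] using subset_span (one_mem_Mset S bs h)
    | succ k IHk =>
      have inner : ∀ i, ∀ ℓ : List (Fin N), ℓ.length ≤ k + 1 → inv ℓ ≤ i →
          wp S bs ℓ ∈ MM S bs h (wt h ℓ) := by
        intro i
        induction i using Nat.strong_induction_on with
        | _ i IHi =>
        intro ℓ hlen hinv
        by_cases hs : ℓ.Pairwise (· ≤ ·)
        · by_cases hcnt : ∀ j, ℓ.count j < p
          · exact subset_span (sorted_wp_mem S bs h hs hcnt)
          · push_neg at hcnt
            obtain ⟨j, hj⟩ := hcnt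
            obtain ⟨s, t, hst⟩ := List.append_of_mem (List.mem_finRange j)
            set A := s.flatMap (fun c => List.replicate (ℓ.count c) c) with hA
            set R := List.replicate (ℓ.count j - p) j ++
              t.flatMap (fun c => List.replicate (ℓ.count c) c) with hR
            have hdecomp : ℓ = A ++ (List.replicate p j ++ R) := by
              conv_lhs => rw [sorted_eq_canonList hs]
              rw [canonList, hst, List.flatMap_append, List.flatMap_cons, hA, hR]
              congr 1
              rw [← List.append_assoc, ← List.replicate_add, Nat.add_sub_cancel' hj]
            have hlen2 : A.length + p + R.length ≤ k + 1 := by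
              rw [hdecomp] at hlen
              simpa [add_assoc] using hlen
            clear_value A R
            rw [hdecomp]
            have hwp : wp S bs (A ++ (List.replicate p j ++ R))
                = wp S bs A * S.iota (S.pMap (bs j)) * wp S bs R := by
              rw [wp_append, wp_append, wp_replicate]
              simp only [yy]
              rw [iota_pow_p]
              exact (mul_assoc _ _ _).symm
            rw [hwp]
            have hz : S.iota (S.pMap (bs j))
                ∈ Submodule.span F (yy S bs '' {c : Fin N | p * h j ≤ h c}) :=
              mem_span_yy S bs h hadapted
                (Nat.mul_pos (by omega) (h_pos S bs h hheight j))
                (pMap_mem S bs h hheight j)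
            have hmap := Submodule.mem_map_of_mem
              (f := LinearMap.mulRight F (wp S bs R) ∘ₗ LinearMap.mulLeft F (wp S bs A)) hz
            rw [Submodule.map_span, ← Set.image_comp] at hmap
            refine Submodule.span_le.2 ?_ hmap
            rintro x ⟨c, hc, rfl⟩
            have hc' : p * h j ≤ h c := hc
            simp only [Function.comp_apply, LinearMap.coe_comp, LinearMap.mulRight_apply,
              LinearMap.mulLeft_apply]
            have heq : wp S bs A * yy S bs c * wp S bs R = wp S bs (A ++ c :: R) := by
              rw [wp_append, wp_cons, mul_assoc]
            rw [heq]
            refine MM_anti S bs h ?_ (IHk (A ++ c :: R) ?_)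
            · simp only [wt_append, wt_cons, wt_replicate]
              omega
            · simp only [List.length_append, List.length_cons]
              omega
        · obtain ⟨A, B, a, b, hdecomp, hba⟩ := exists_desc hs
          subst hdecomp
          have hswap := inv_swap A B hba
          have h1 : wp S bs (A ++ a :: b :: B)
              = wp S bs (A ++ b :: a :: B)
                + wp S bs A * S.iota ⁅bs a, bs b⁆ * wp S bs B := by
            rw [iota_bracket]
            simp only [wp_append, wp_cons, yy]
            noncomm_ring
          rw [h1]
          refine add_mem ?_ ?_
          · have hwteq : wt h (A ++ b :: a :: B) = wt h (A ++ a :: b :: B) := by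
              simp only [wt_append, wt_cons]
              omega
            rw [← hwteq]
            refine IHi (inv (A ++ b :: a :: B)) (by omega) _ ?_ le_rfl
            simpa using hlen
          · have hz : S.iota ⁅bs a, bs b⁆
                ∈ Submodule.span F (yy S bs '' {c : Fin N | h a + h b ≤ h c}) :=
              mem_span_yy S bs h hadapted
                (le_trans (h_pos S bs h hheight a) (Nat.le_add_right _ _))
                (bracket_mem S bs h hheight a b)
            have hmap := Submodule.mem_map_of_mem
              (f := LinearMap.mulRight F (wp S bs B) ∘ₗ LinearMap.mulLeft F (wp S bs A)) hz
            rw [Submodule.map_span, ← Set.image_comp] at hmap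
            refine Submodule.span_le.2 ?_ hmap
            rintro x ⟨c, hc, rfl⟩
            have hc' : h a + h b ≤ h c := hc
            simp only [Function.comp_apply, LinearMap.coe_comp, LinearMap.mulRight_apply,
              LinearMap.mulLeft_apply]
            have heq : wp S bs A * yy S bs c * wp S bs B = wp S bs (A ++ c :: B) := by
              rw [wp_append, wp_cons, mul_assoc]
            rw [heq]
            refine MM_anti S bs h ?_ (IHk (A ++ c :: B) ?_)
            · simp only [wt_append, wt_cons]
              omega
            · simp only [List.length_append, List.length_cons] at hlen ⊢
              omega
      exact fun ℓ hlen => inner (inv ℓ) ℓ hlen le_rfl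
  exact fun ℓ => main ℓ.length ℓ le_rfl

end Key


section Assemble

variable {N : ℕ} (bs : Module.Basis (Fin N) F L) (h : Fin N → ℕ) [Fact p.Prime]

theorem Mset_wp {n : ℕ} {a : S.uRes} (ha : a ∈ Mset S bs h n) :
    ∃ ℓ : List (Fin N), a = wp S bs ℓ ∧ n ≤ wt h ℓ := by
  obtain ⟨α, -, h2, h3⟩ := ha
  refine ⟨canonList α, ?_, ?_⟩
  · rw [wp_canonList, h3]
    simp only [yy]
  · rw [wt_canonList]
    exact h2

theorem MM_mul_le
    (hheight : ∀ i, bs i ∈ S.dimSub (h i) ∧ bs i ∉ S.dimSub (h i + 1))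
    (hadapted : ∀ m : ℕ, 1 ≤ m →
      S.dimSub m = Submodule.span F (bs '' {i : Fin N | m ≤ h i}))
    (a b : ℕ) : MM S bs h a * MM S bs h b ≤ MM S bs h (a + b) := by
  rw [MM, MM, Submodule.span_mul_span]
  refine Submodule.span_le.2 ?_
  rintro x hx
  rw [Set.mem_mul] at hx
  obtain ⟨u, hu, v, hv, rfl⟩ := hx
  obtain ⟨ℓ₁, rfl, h1⟩ := Mset_wp S bs h hu
  obtain ⟨ℓ₂, rfl, h2⟩ := Mset_wp S bs h hv
  have := key S bs h hheight hadapted (ℓ₁ ++ ℓ₂)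
  rw [wp_append] at this
  exact MM_anti S bs h (by rw [wt_append]; omega) this

theorem mul_mem_MM
    (hheight : ∀ i, bs i ∈ S.dimSub (h i) ∧ bs i ∉ S.dimSub (h i + 1))
    (hadapted : ∀ m : ℕ, 1 ≤ m →
      S.dimSub m = Submodule.span F (bs '' {i : Fin N | m ≤ h i}))
    {a b : ℕ} {x y : S.uRes} (hx : x ∈ MM S bs h a) (hy : y ∈ MM S bs h b) :
    x * y ∈ MM S bs h (a + b) :=
  MM_mul_le S bs h hheight hadapted a b (Submodule.mul_mem_mul hx hy)

theorem iota_mem_MM0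
    (hadapted : ∀ m : ℕ, 1 ≤ m →
      S.dimSub m = Submodule.span F (bs '' {i : Fin N | m ≤ h i}))
    (x : L) : S.iota x ∈ MM S bs h 0 := by
  have hx : x ∈ Submodule.span F (Set.range bs) := Module.Basis.mem_span bs x
  have : S.iota x ∈ Submodule.map S.iota (Submodule.span F (Set.range bs)) :=
    Submodule.mem_map_of_mem hx
  rw [Submodule.map_span, ← Set.range_comp] at this
  refine Submodule.span_le.2 ?_ this
  rintro _ ⟨j, rfl⟩
  exact subset_span (Mset_anti S bs h (Nat.zero_le _) (yy_mem_Mset S bs h j))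

theorem top_MM
    (hheight : ∀ i, bs i ∈ S.dimSub (h i) ∧ bs i ∉ S.dimSub (h i + 1))
    (hadapted : ∀ m : ℕ, 1 ≤ m →
      S.dimSub m = Submodule.span F (bs '' {i : Fin N | m ≤ h i}))
    (a : S.uRes) : a ∈ MM S bs h 0 := by
  have htop' : ∀ t : TensorAlgebra F L,
      t ∈ Algebra.adjoin F (Set.range (TensorAlgebra.ι F (M := L))) := by
    intro t
    induction t using TensorAlgebra.induction with
    | algebraMap r => exact Subalgebra.algebraMap_mem _ r
    | ι x => exact Algebra.subset_adjoin ⟨x, rfl⟩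
    | mul a b ha hb => exact mul_mem ha hb
    | add a b ha hb => exact add_mem ha hb
  have htop : Algebra.adjoin F (Set.range (TensorAlgebra.ι F (M := L))) = ⊤ :=
    eq_top_iff.2 fun t _ => htop' t
  let g : TensorAlgebra F L →ₐ[F] S.uRes :=
    (RingQuot.mkAlgHom F S.pRel).comp (UniversalEnvelopingAlgebra.mkAlgHom F L)
  have hg : Function.Surjective g := by
    have hco : ⇑g = ⇑(RingQuot.mkAlgHom F S.pRel)
        ∘ ⇑(UniversalEnvelopingAlgebra.mkAlgHom F L) := rfl
    rw [hco]
    exact (RingQuot.mkAlgHom_surjective F S.pRel).comp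
      (RingCon.mkₐ_surjective (α := F) _)
  have hgi : ⇑g ∘ ⇑(TensorAlgebra.ι F (M := L)) = ⇑S.iota := by
    funext x
    show RingQuot.mkAlgHom F S.pRel (UniversalEnvelopingAlgebra.mkAlgHom F L
      (TensorAlgebra.ι F x)) = S.iota x
    rw [← UniversalEnvelopingAlgebra.ι_apply, ← iota_apply]
  have hadj : Algebra.adjoin F (Set.range ⇑S.iota) = ⊤ := by
    rw [← hgi, Set.range_comp, Algebra.adjoin_image, htop, Algebra.map_top,
      AlgHom.range_eq_top]
    exact hg
  let A : Subalgebra F S.uRes :=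
    { carrier := (MM S bs h 0 : Set S.uRes)
      mul_mem' := fun hx hy => by
        simpa using mul_mem_MM S bs h hheight hadapted hx hy
      one_mem' := subset_span (one_mem_Mset S bs h)
      add_mem' := fun hx hy => add_mem hx hy
      zero_mem' := zero_mem _
      algebraMap_mem' := fun r => by
        rw [Algebra.algebraMap_eq_smul_one]
        exact Submodule.smul_mem _ _ (subset_span (one_mem_Mset S bs h)) }
  have hle : (⊤ : Subalgebra F S.uRes) ≤ A := by
    rw [← hadj]
    refine Algebra.adjoin_le_iff.2 ?_
    rintro _ ⟨x, rfl⟩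
    exact iota_mem_MM0 S bs h hadapted x
  exact hle (Algebra.mem_top)

theorem omega_le_MM1
    (hheight : ∀ i, bs i ∈ S.dimSub (h i) ∧ bs i ∉ S.dimSub (h i + 1))
    (hadapted : ∀ m : ℕ, 1 ≤ m →
      S.dimSub m = Submodule.span F (bs '' {i : Fin N | m ≤ h i})) :
    S.omega ≤ MM S bs h 1 := by
  rw [RestrictedStr.omega]
  refine Submodule.span_le.2 ?_
  rintro _ ⟨u, v, z, rfl⟩
  have hu := top_MM S bs h hheight hadapted u
  have hv := top_MM S bs h hheight hadapted v
  have hz : S.iota z ∈ MM S bs h 1 := by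
    have hz1 : z ∈ S.dimSub 1 := by
      rw [mem_dimSub, pow_one]
      exact iota_mem_omega S z
    have hspan := mem_span_yy S bs h hadapted le_rfl hz1
    refine Submodule.span_le.2 ?_ hspan
    rintro _ ⟨c, hc, rfl⟩
    exact subset_span (Mset_anti S bs h hc (yy_mem_Mset S bs h c))
  have := mul_mem_MM S bs h hheight hadapted
    (mul_mem_MM S bs h hheight hadapted hu hz) hv
  simpa using this

theorem list_prod_mem_omega_pow (l : List (Fin N)) (f : Fin N → S.uRes) (g : Fin N → ℕ)
    (hf : ∀ j ∈ l, f j ∈ S.omega ^ g j) :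
    (l.map f).prod ∈ S.omega ^ (l.map g).sum := by
  induction l with
  | nil =>
    simp only [List.map_nil, List.prod_nil, List.sum_nil, pow_zero]
    exact Submodule.one_le.1 le_rfl
  | cons x t ih =>
    simp only [List.map_cons, List.prod_cons, List.sum_cons, pow_add]
    exact Submodule.mul_mem_mul (hf x (List.mem_cons_self))
      (ih fun j hj => hf j (List.mem_cons_of_mem x hj))

end Assemble

end JenningsAux

theorem omega_pow_eq_span_pbw_monomials (p : ℕ) [Fact p.Prime] (F L : Type*) [Field F]
    [CharP F p] [LieRing L] [LieAlgebra F L] [FiniteDimensional F L]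
    (S : RestrictedStr p F L) (hnil : S.IsPNilpotent)
    (N : ℕ) (bs : Module.Basis (Fin N) F L) (h : Fin N → ℕ)
    (hheight : ∀ i, bs i ∈ S.dimSub (h i) ∧ bs i ∉ S.dimSub (h i + 1))
    (hadapted : ∀ m : ℕ, 1 ≤ m →
      S.dimSub m = Submodule.span F (bs '' {i : Fin N | m ≤ h i})) :
    ∀ n : ℕ, 1 ≤ n →
      S.omega ^ n = Submodule.span F
        {a : S.uRes | ∃ α : Fin N → ℕ, (∀ j, α j ≤ p - 1) ∧
          n ≤ ∑ j : Fin N, α j * h j ∧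
          a = ((List.finRange N).map fun j => S.iota (bs j) ^ α j).prod} := by
  intro n hn
  show S.omega ^ n = JenningsAux.MM S bs h n
  refine le_antisymm ?_ ?_
  · -- ω^n ⊆ span of monomials
    induction n, hn using Nat.le_induction with
    | base =>
      rw [pow_one]
      exact JenningsAux.omega_le_MM1 S bs h hheight hadapted
    | succ n hn ih =>
      rw [pow_succ]
      refine le_trans (mul_le_mul' ih
        (JenningsAux.omega_le_MM1 S bs h hheight hadapted)) ?_
      exact JenningsAux.MM_mul_le S bs h hheight hadapted n 1
  · refine Submodule.span_le.2 ?_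
    rintro _ ⟨α, hα, hwt, rfl⟩
    have hmem : ((List.finRange N).map fun j => S.iota (bs j) ^ α j).prod
        ∈ S.omega ^ ((List.finRange N).map fun j => α j * h j).sum := by
      refine JenningsAux.list_prod_mem_omega_pow S (List.finRange N)
        (fun j => S.iota (bs j) ^ α j) (fun j => α j * h j) ?_
      intro j _
      have h1 : S.iota (bs j) ∈ S.omega ^ h j := (hheight j).1
      have := Submodule.pow_mem_pow _ h1 (α j)
      rwa [← pow_mul, mul_comm] at this
    have hsum : ((List.finRange N).map fun j => α j * h j).sum = ∑ j : Fin N, α j * h j :=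
      (Fin.sum_univ_def _).symm
    rw [hsum] at hmem
    exact JenningsAux.omega_pow_le S hn hwt hmem
end

section
/- Let L be a finite-dimensional abelian p-nilpotent restricted Lie algebra over a field F of characteristic p > 0 generated as a restricted Lie algebra by x₁,…,xₙ, and let e be maximal with L^{[p]^e} ≠ 0. Then L^{[p]^e} equals the F-linear span of the elements xᵢ^{[p]^e} for those i with exponent e(xᵢ) = e + 1. -/
section Restricted

variable (p : ℕ) (F : Type*) (L : Type*) [Field F] [LieRing L] [LieAlgebra F L]

variable {p F L}

namespace RestrictedStr

variable (S : RestrictedStr p F L)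

attribute [local instance] LieRing.ofAssociativeRing

end RestrictedStr

end Restricted

section AuxLemmas

attribute [local instance] LieRing.ofAssociativeRing

variable {p : ℕ} [Fact p.Prime] {F L : Type*} [Field F] [CharP F p] [LieRing L] [LieAlgebra F L]
  [IsLieAbelian L] (S : RestrictedStr p F L)

lemma RestrictedStr.pMap_add' (x y : L) : S.pMap (x + y) = S.pMap x + S.pMap y := by
  have key : ∀ f : Module.Dual F L, f (S.pMap (x + y) - S.pMap x - S.pMap y) = 0 := by
    intro f
    have hf : ∀ a b : L, f ⁅a, b⁆ = ⁅f a, f b⁆ := by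
      intro a b
      rw [trivial_lie_zero, LieRing.of_associative_ring_bracket, mul_comm, sub_self, map_zero]
    let g : L →ₗ⁅F⁆ F := { toLinearMap := f, map_lie' := hf _ _ }
    let φ := UniversalEnvelopingAlgebra.lift F g
    have h := congrArg φ (S.jacobson_add x y)
    simp only [map_sub, map_pow, UniversalEnvelopingAlgebra.lift_ι_apply, φ] at h
    have hg : ∀ z : L, g z = f z := fun z => rfl
    rw [map_sub, map_sub, ← hg, ← hg, ← hg, h, hg, hg, hg, map_add, add_pow_char,
      sub_sub, sub_self]
  have := (Module.forall_dual_apply_eq_zero_iff F _).mp key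
  rw [sub_sub, sub_eq_zero] at this
  exact this

lemma RestrictedStr.pMap_zero' : S.pMap 0 = (0 : L) := by
  have := S.pMap_add' 0 0
  rw [add_zero] at this
  exact (left_eq_add.mp this)

lemma RestrictedStr.iter_zero (k : ℕ) : S.pMap^[k] (0 : L) = 0 := by
  induction k with
  | zero => rfl
  | succ m ih => rw [Function.iterate_succ_apply', ih, S.pMap_zero']

lemma RestrictedStr.iter_add (k : ℕ) (x y : L) :
    S.pMap^[k] (x + y) = S.pMap^[k] x + S.pMap^[k] y := by
  induction k with
  | zero => rfl
  | succ m ih =>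
    rw [Function.iterate_succ_apply', Function.iterate_succ_apply',
      Function.iterate_succ_apply', ih, S.pMap_add']

lemma RestrictedStr.iter_smul (k : ℕ) (c : F) (x : L) :
    S.pMap^[k] (c • x) = c ^ p ^ k • S.pMap^[k] x := by
  induction k with
  | zero => simp
  | succ m ih =>
    rw [Function.iterate_succ_apply', Function.iterate_succ_apply', ih, S.smul_pow,
      ← pow_mul, ← pow_succ]

end AuxLemmas


theorem abelian_top_p_power_span (p : ℕ) [Fact p.Prime] (F L : Type*) [Field F]
    [CharP F p] [LieRing L] [LieAlgebra F L] [FiniteDimensional F L] [IsLieAbelian L]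
    (S : RestrictedStr p F L) (hnil : S.IsPNilpotent)
    (n : ℕ) (x : Fin n → L) (hgen : S.resSpan (Set.range x) = ⊤)
    (e : ℕ)
    (he : Submodule.span F (Set.range fun y : L => S.pMap^[e] y) ≠ ⊥)
    (he' : ∀ y : L, S.pMap^[e + 1] y = 0) :
    Submodule.span F (Set.range fun y : L => S.pMap^[e] y)
      = Submodule.span F
          {a : L | ∃ i : Fin n,
            (S.pMap^[e] (x i) ≠ 0 ∧ S.pMap^[e + 1] (x i) = 0) ∧ a = S.pMap^[e] (x i)} := by
  classical
  set R := Submodule.span F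
      {a : L | ∃ i : Fin n,
        (S.pMap^[e] (x i) ≠ 0 ∧ S.pMap^[e + 1] (x i) = 0) ∧ a = S.pMap^[e] (x i)} with hR
  -- every element of L lies in the span of iterates of the generators
  set G : Set L := {a | ∃ i : Fin n, ∃ k : ℕ, a = S.pMap^[k] (x i)} with hG
  have hT : ∀ y : L, y ∈ Submodule.span F G := by
    let K : LieSubalgebra F L :=
      { toSubmodule := Submodule.span F G
        lie_mem' := fun {a b} _ _ => by
          rw [trivial_lie_zero]; exact (Submodule.span F G).zero_mem }
    have hmem : K ∈ {K : LieSubalgebra F L | Set.range x ⊆ ↑K ∧ ∀ z ∈ K, S.pMap z ∈ K} := by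
      constructor
      · rintro _ ⟨i, rfl⟩
        exact Submodule.subset_span ⟨i, 0, rfl⟩
      · intro z hz
        have hz' : z ∈ Submodule.span F G := hz
        refine Submodule.span_induction ?_ ?_ ?_ ?_ hz'
        · rintro _ ⟨i, k, rfl⟩
          exact Submodule.subset_span ⟨i, k + 1, (Function.iterate_succ_apply' _ _ _).symm⟩
        · rw [S.pMap_zero']; exact (Submodule.span F G).zero_mem
        · intro a b _ _ ha hb
          rw [S.pMap_add']; exact Submodule.add_mem _ ha hb
        · intro c a _ ha
          rw [← Function.iterate_one S.pMap, S.iter_smul]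
          exact Submodule.smul_mem _ _ ha
    have hle : S.resSpan (Set.range x) ≤ K := sInf_le hmem
    rw [hgen] at hle
    intro y
    exact hle (LieSubalgebra.mem_top y)
  apply le_antisymm
  · rw [Submodule.span_le]
    rintro _ ⟨y, rfl⟩
    simp only [SetLike.mem_coe]
    refine Submodule.span_induction ?_ ?_ ?_ ?_ (hT y)
    · rintro _ ⟨i, k, rfl⟩
      match k with
      | 0 =>
        rw [Function.iterate_zero_apply]
        by_cases h0 : S.pMap^[e] (x i) = 0
        · rw [h0]; exact R.zero_mem
        · exact Submodule.subset_span ⟨i, ⟨h0, he' _⟩, rfl⟩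
      | m + 1 =>
        have : S.pMap^[e] (S.pMap^[m + 1] (x i)) = 0 := by
          rw [← Function.iterate_add_apply]
          have heq : e + (m + 1) = m + (e + 1) := by ring
          rw [heq, Function.iterate_add_apply, he', S.iter_zero]
        rw [this]; exact R.zero_mem
    · rw [S.iter_zero]; exact R.zero_mem
    · intro a b _ _ ha hb
      rw [S.iter_add]; exact R.add_mem ha hb
    · intro c a _ ha
      rw [S.iter_smul]; exact R.smul_mem _ ha
  · rw [Submodule.span_le]
    rintro _ ⟨i, _, rfl⟩
    exact Submodule.subset_span ⟨x i, rfl⟩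
end
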